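/- arXiv:1806.01918 — 7 statements merged into one kernel-verified Lean document; each statement's English description precedes it below -/
import Mathlib

section
/- For all n, n' ∈ ℕ₊ and every ReLU layer function h ∈ RL(n, n'), the number of attained signatures satisfies |𝒮_h| ≤ Σ_{j=0}^{n} C(n', j), where C(n', j) denotes the binomial coefficient. -/
open Matrix

/-- A ReLU layer function with weight matrix `W` and bias `b`:
`h(x)_i = max(0, ⟨x, w_i⟩ + b_i)` where `w_i` is the `i`-th row of `W`. -/
noncomputable def relu {n n' : ℕ} (W : Matrix (Fin n') (Fin n) ℝ) (b : Fin n' → ℝ)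
    (x : Fin n → ℝ) : Fin n' → ℝ :=
  fun i => max 0 (W i ⬝ᵥ x + b i)

/-- The signature of `x`: its `i`-th entry is `true` iff `⟨x, w_i⟩ + b_i > 0`. -/
noncomputable def sig {n n' : ℕ} (W : Matrix (Fin n') (Fin n) ℝ) (b : Fin n' → ℝ)
    (x : Fin n → ℝ) : Fin n' → Bool :=
  fun i => decide (0 < W i ⬝ᵥ x + b i)

open Finset Module

/-!
A pattern `{i | 0 < f i x}` of `n + 1` affine functionals `f i` on an `n`-dimensional space can
never realise every subset of the indices: the linear parts are dependent, so some nontrivial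
combination `∑ c i * f i` is constant. Choosing the sign of `c` so that some `c i > 0`, the
pattern `{i | 0 < c i}` forces that constant to be positive, the pattern `{i | c i < 0}` forces it
to be nonpositive. Hence the family of signatures has VC dimension at most `n`, and the
Sauer–Shelah lemma bounds its size.
-/

section SignPatterns

variable {ι : Type*}

lemma mul_nonneg_of_pos_iff_pos {a c : ℝ} (h : 0 < a ↔ 0 < c) : 0 ≤ c * a := by
  rcases le_or_gt c 0 with hc | hc
  · exact mul_nonneg_of_nonpos_of_nonpos hc (not_lt.1 fun ha => (h.1 ha).not_ge hc)
  · exact (mul_pos hc (h.2 hc)).le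

lemma sum_mul_pos_of_pos_iff_pos {s : Finset ι} {a c : ι → ℝ} (h : ∀ i ∈ s, 0 < a i ↔ 0 < c i)
    (hc : ∃ i ∈ s, 0 < c i) : 0 < ∑ i ∈ s, c i * a i :=
  sum_pos' (fun i hi => mul_nonneg_of_pos_iff_pos (h i hi))
    (hc.imp fun i ⟨hi, hci⟩ => ⟨hi, mul_pos hci ((h i hi).2 hci)⟩)

lemma not_forall_exists_pos_iff_of_sum_mul_const {E : Type*} {f : ι → E → ℝ} {s : Finset ι}
    {c : ι → ℝ} (hc : ∃ i ∈ s, c i ≠ 0)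
    (hconst : ∀ x y, ∑ i ∈ s, c i * f i x = ∑ i ∈ s, c i * f i y) :
    ¬ ∀ t ⊆ s, ∃ x, ∀ i ∈ s, i ∈ t ↔ 0 < f i x := by
  intro hshat
  wlog hpos : ∃ i ∈ s, 0 < c i generalizing c
  · obtain ⟨i, hi, hci⟩ := hc
    push Not at hpos
    refine this (c := -c) ⟨i, hi, neg_ne_zero.2 hci⟩ (fun x y => ?_)
      ⟨i, hi, neg_pos.2 ((hpos i hi).lt_of_ne hci)⟩
    simp only [Pi.neg_apply, neg_mul, sum_neg_distrib, hconst x y]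
  have realise (d : ι → ℝ) : ∃ x, ∀ i ∈ s, 0 < f i x ↔ 0 < d i :=
    (hshat _ (filter_subset (0 < d ·) s)).imp fun x hx i hi => by
      rw [← hx i hi, mem_filter, and_iff_right hi]
  obtain ⟨x, hx⟩ := realise c
  obtain ⟨y, hy⟩ := realise (-c)
  have hx_pos : 0 < ∑ i ∈ s, c i * f i x := sum_mul_pos_of_pos_iff_pos hx hpos
  have hy_nonneg : 0 ≤ ∑ i ∈ s, -c i * f i y :=
    sum_nonneg fun i hi => mul_nonneg_of_pos_iff_pos (hy i hi)
  simp only [neg_mul, sum_neg_distrib, neg_nonneg] at hy_nonneg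
  linarith [hconst x y]

end SignPatterns

theorem Module.exists_nontrivial_relation_on_finset_of_finrank_lt_card {R M ι : Type*} [Ring R]
    [StrongRankCondition R] [AddCommGroup M] [Module R M] [Module.Finite R M] (v : ι → M)
    {s : Finset ι} (h : finrank R M < #s) :
    ∃ c : ι → R, ∑ i ∈ s, c i • v i = 0 ∧ ∃ i ∈ s, c i ≠ 0 := by
  have hv : ¬ LinearIndepOn R v s := fun hv =>
    h.not_ge (by simpa using hv.fintype_card_le_finrank)
  simpa [linearIndepOn_finset_iff] using hv

theorem card_le_finrank_of_forall_exists_pos_iff {ι E : Type*} [AddCommGroup E] [Module ℝ E]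
    [FiniteDimensional ℝ E] (f : ι → E →ᵃ[ℝ] ℝ) {s : Finset ι}
    (hs : ∀ t ⊆ s, ∃ x, ∀ i ∈ s, i ∈ t ↔ 0 < f i x) : #s ≤ finrank ℝ E := by
  by_contra! h
  obtain ⟨c, hc, hc_ne⟩ := Module.exists_nontrivial_relation_on_finset_of_finrank_lt_card
    (fun i => (f i).linear) ((Subspace.dual_finrank_eq (K := ℝ) (V := E)).trans_lt h)
  refine not_forall_exists_pos_iff_of_sum_mul_const (f := fun i => f i) hc_ne
    (fun x y => ?_) hs
  rw [← sub_eq_zero, ← sum_sub_distrib]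
  calc ∑ i ∈ s, (c i * f i x - c i * f i y)
      = ∑ i ∈ s, c i * (f i).linear (x -ᵥ y) := by
        simp_rw [AffineMap.linearMap_vsub, vsub_eq_sub, mul_sub]
    _ = (∑ i ∈ s, c i • (f i).linear) (x -ᵥ y) := by simp
    _ = 0 := by rw [hc, LinearMap.zero_apply]

theorem Finset.card_le_sum_choose_of_vcDim_le {α : Type*} [Fintype α] [DecidableEq α]
    {𝒜 : Finset (Finset α)} {d : ℕ} (h𝒜 : 𝒜.vcDim ≤ d) :
    #𝒜 ≤ ∑ j ∈ range (d + 1), (Fintype.card α).choose j :=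
  calc #𝒜 ≤ #𝒜.shatterer := card_le_card_shatterer 𝒜
    _ ≤ ∑ k ∈ Iic 𝒜.vcDim, (Fintype.card α).choose k := card_shatterer_le_sum_vcDim
    _ ≤ ∑ j ∈ range (d + 1), (Fintype.card α).choose j := by
      rw [Nat.range_succ_eq_Iic]
      exact sum_le_sum_of_subset (Iic_subset_Iic.2 h𝒜)

section ReluLayer

variable {n n' : ℕ} (W : Matrix (Fin n') (Fin n) ℝ) (b : Fin n' → ℝ)

noncomputable def preactivation (i : Fin n') : (Fin n → ℝ) →ᵃ[ℝ] ℝ :=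
  (dotProductBilin ℝ ℝ (W i)).toAffineMap + AffineMap.const ℝ _ (b i)

@[simp]
lemma preactivation_apply (i : Fin n') (x : Fin n → ℝ) :
    preactivation W b i x = W i ⬝ᵥ x + b i :=
  rfl

open Classical in
noncomputable def activationPatterns : Finset (Finset (Fin n')) :=
  {t | ∃ x, ({i | 0 < W i ⬝ᵥ x + b i} : Finset (Fin n')) = t}

lemma vcDim_activationPatterns_le : (activationPatterns W b).vcDim ≤ n := by
  refine Finset.sup_le fun s hs => ?_
  simpa using card_le_finrank_of_forall_exists_pos_iff (preactivation W b) fun t ht => by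
    obtain ⟨u, hu, rfl⟩ := mem_shatterer.1 hs ht
    obtain ⟨x, rfl⟩ := by simpa [activationPatterns] using hu
    exact ⟨x, fun i hi => by simp [hi]⟩

lemma ncard_range_sig_le_card_activationPatterns :
    (Set.range (sig W b)).ncard ≤ #(activationPatterns W b) := by
  rw [← Set.ncard_coe_finset]
  refine Set.ncard_le_ncard_of_injOn (fun σ => ({i | σ i = true} : Finset (Fin n'))) ?_ ?_
    (Set.toFinite _)
  · rintro _ ⟨x, rfl⟩
    simp [activationPatterns, sig]
  · intro σ _ τ _ hστ
    funext i
    simpa using congrArg (i ∈ ·) hστ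

end ReluLayer

theorem stmt0_general (n n' : ℕ)
    (W : Matrix (Fin n') (Fin n) ℝ) (b : Fin n' → ℝ) :
    (Set.range (sig W b)).ncard ≤ ∑ j ∈ Finset.range (n + 1), n'.choose j := by
  calc (Set.range (sig W b)).ncard ≤ #(activationPatterns W b) :=
        ncard_range_sig_le_card_activationPatterns W b
    _ ≤ ∑ j ∈ range (n + 1), n'.choose j := by
        simpa using card_le_sum_choose_of_vcDim_le (vcDim_activationPatterns_le W b)

/-- For all `n, n' ∈ ℕ₊` and every ReLU layer function `h ∈ RL(n, n')`, the number of
attained signatures satisfies `|𝒮_h| ≤ ∑_{j=0}^{n} C(n', j)`. -/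
theorem stmt0 (n n' : ℕ) (hn : 0 < n) (hn' : 0 < n')
    (W : Matrix (Fin n') (Fin n) ℝ) (b : Fin n' → ℝ) :
    (Set.range (sig W b)).ncard ≤ ∑ j ∈ Finset.range (n + 1), n'.choose j :=
  stmt0_general n n' W b
end

section
/- In the multilayer setting with widths n_0, …, n_L and layers h = (h_1, …, h_L), for every multi signature s ∈ {0,1}^{n_1} × ⋯ × {0,1}^{n_L}, the region R_h(s) is a convex subset of ℝ^{n_0}. -/
open Matrix

/-- Forward pass through the first `l` layers: `fwd n W b l = h_l ∘ ⋯ ∘ h_1`. -/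
noncomputable def fwd (n : ℕ → ℕ) (W : ∀ l : ℕ, Matrix (Fin (n (l + 1))) (Fin (n l)) ℝ)
    (b : ∀ l : ℕ, Fin (n (l + 1)) → ℝ) : (l : ℕ) → (Fin (n 0) → ℝ) → (Fin (n l) → ℝ)
  | 0 => fun x => x
  | l + 1 => fun x => relu (W l) (b l) (fwd n W b l x)

/-- Multi signature of length `m`:
`msig n W b m x = (S_{h_1}(x), S_{h_2}(h_1(x)), …, S_{h_m}(h_{m-1}∘⋯∘h_1(x)))`. -/
noncomputable def msig (n : ℕ → ℕ) (W : ∀ l : ℕ, Matrix (Fin (n (l + 1))) (Fin (n l)) ℝ)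
    (b : ∀ l : ℕ, Fin (n (l + 1)) → ℝ) (m : ℕ) (x : Fin (n 0) → ℝ) :
    ∀ l : Fin m, Fin (n (l.val + 1)) → Bool :=
  fun l => sig (W l.val) (b l.val) (fwd n W b l.val x)

/-- Number of active units of a binary vector `s`, i.e. `|s|`. -/
def cnt {k : ℕ} (s : Fin k → Bool) : ℕ := (Finset.univ.filter fun j => s j = true).card

/-- `min(n_0, |s_1|, …, |s_i|)` for a length-`i` multi signature `s`. -/
def minAct (n : ℕ → ℕ) (i : ℕ) (s : ∀ l : Fin i, Fin (n (l.val + 1)) → Bool) : ℕ :=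
  Finset.univ.fold min (n 0) (fun l : Fin i => cnt (s l))


/-- In the multilayer setting with widths `n 0, …, n L` and ReLU layers
`h_l = relu (W (l-1)) (b (l-1))`, for every multi signature
`s ∈ {0,1}^{n 1} × ⋯ × {0,1}^{n L}`, the region `R_h(s) = {x : S_h(x) = s}`
is a convex subset of `ℝ^{n 0}`. -/
theorem stmt5 (L : ℕ) (hL : 0 < L) (n : ℕ → ℕ) (hn : ∀ l, 0 < n l)
    (W : ∀ l : ℕ, Matrix (Fin (n (l + 1))) (Fin (n l)) ℝ)
    (b : ∀ l : ℕ, Fin (n (l + 1)) → ℝ)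
    (s : ∀ l : Fin L, Fin (n (l.val + 1)) → Bool) :
    Convex ℝ {x : Fin (n 0) → ℝ | msig n W b L x = s} := by

  have key : ∀ m, ∀ hm : m ≤ L,
      Convex ℝ {x : Fin (n 0) → ℝ | ∀ l, ∀ h : l < m,
        sig (W l) (b l) (fwd n W b l x) = s ⟨l, h.trans_le hm⟩} ∧
      ∃ (M : (Fin (n 0) → ℝ) →ₗ[ℝ] (Fin (n m) → ℝ)) (c : Fin (n m) → ℝ),
        ∀ x : Fin (n 0) → ℝ, (∀ l, ∀ h : l < m,
          sig (W l) (b l) (fwd n W b l x) = s ⟨l, h.trans_le hm⟩) →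
          fwd n W b m x = M x + c := by
    intro m
    induction m with
    | zero =>
      intro hm
      refine ⟨?_, LinearMap.id, 0, ?_⟩
      · have : {x : Fin (n 0) → ℝ | ∀ l, ∀ h : l < 0,
            sig (W l) (b l) (fwd n W b l x) = s ⟨l, h.trans_le hm⟩} = Set.univ := by
          ext x; simp
        rw [this]; exact convex_univ
      · intro x _; funext i; simp [fwd]
    | succ m ih =>
      intro hm
      have hm' : m ≤ L := le_of_lt (Nat.lt_of_succ_le hm)
      obtain ⟨hconv, M, c, hM⟩ := ih hm'
      set σ : Fin (n (m + 1)) → Bool := s ⟨m, Nat.lt_of_succ_le hm⟩ with hσ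
      -- membership splitting
      have hsplit : ∀ x : Fin (n 0) → ℝ,
          (∀ l, ∀ h : l < m + 1, sig (W l) (b l) (fwd n W b l x) = s ⟨l, h.trans_le hm⟩) ↔
          ((∀ l, ∀ h : l < m, sig (W l) (b l) (fwd n W b l x) = s ⟨l, h.trans_le hm'⟩) ∧
            sig (W m) (b m) (fwd n W b m x) = σ) := by
        intro x
        constructor
        · intro h
          exact ⟨fun l hl => h l (hl.trans (Nat.lt_succ_self m)), h m (Nat.lt_succ_self m)⟩
        · rintro ⟨h1, h2⟩ l hl
          rcases Nat.lt_or_ge l m with hlm | hlm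
          · exact h1 l hlm
          · have : l = m := le_antisymm (Nat.lt_succ_iff.mp hl) hlm
            subst this; exact h2
      constructor
      · -- convexity
        intro x hx y hy a bb ha hb hab
        rw [Set.mem_setOf_eq, hsplit] at hx hy ⊢
        obtain ⟨hx1, hx2⟩ := hx
        obtain ⟨hy1, hy2⟩ := hy
        have hz1 : a • x + bb • y ∈ {x : Fin (n 0) → ℝ | ∀ l, ∀ h : l < m,
            sig (W l) (b l) (fwd n W b l x) = s ⟨l, h.trans_le hm'⟩} :=
          hconv hx1 hy1 ha hb hab
        refine ⟨hz1, ?_⟩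
        funext i
        have ex : fwd n W b m x = M x + c := hM x hx1
        have ey : fwd n W b m y = M y + c := hM y hy1
        have ez : fwd n W b m (a • x + bb • y) = M (a • x + bb • y) + c := hM _ hz1
        have keyval : W m i ⬝ᵥ (M (a • x + bb • y) + c) + b m i =
            a * (W m i ⬝ᵥ (M x + c) + b m i) + bb * (W m i ⬝ᵥ (M y + c) + b m i) := by
          have hb1 : bb = 1 - a := by linarith
          subst hb1
          simp only [map_add, _root_.map_smul, dotProduct_add, dotProduct_smul,
            smul_eq_mul, Pi.smul_apply]
          ring
        have hxv := congrFun hx2 i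
        have hyv := congrFun hy2 i
        simp only [sig, ex, ey, ez] at hxv hyv ⊢
        rw [keyval]
        cases hσi : σ i with
        | true =>
          rw [hσi] at hxv hyv
          have px : 0 < W m i ⬝ᵥ (M x + c) + b m i := by
            simpa using hxv
          have py : 0 < W m i ⬝ᵥ (M y + c) + b m i := by
            simpa using hyv
          simp only [decide_eq_true_eq]
          rcases eq_or_lt_of_le ha with h0 | h0
          · have ha0 : a = 0 := h0.symm
            have hbb : bb = 1 := by linarith
            rw [ha0, hbb]; simpa using py
          · nlinarith [mul_nonneg hb py.le, mul_pos h0 px]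
        | false =>
          rw [hσi] at hxv hyv
          have px : ¬ (0 < W m i ⬝ᵥ (M x + c) + b m i) := by
            simpa using hxv
          have py : ¬ (0 < W m i ⬝ᵥ (M y + c) + b m i) := by
            simpa using hyv
          push_neg at px py
          simp only [decide_eq_false_iff_not, not_lt]
          nlinarith [mul_nonpos_of_nonneg_of_nonpos ha px, mul_nonpos_of_nonneg_of_nonpos hb py]
      · -- affine representation
        refine ⟨(LinearMap.pi (fun i : Fin (n (m + 1)) =>
            if σ i then LinearMap.proj i else 0)).comp
            ((Matrix.mulVecLin (W m)).comp M),
            (fun i => if σ i then W m i ⬝ᵥ c + b m i else 0), ?_⟩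
        intro x hx
        rw [hsplit] at hx
        obtain ⟨hx1, hx2⟩ := hx
        have ex : fwd n W b m x = M x + c := hM x hx1
        funext i
        have hxv := congrFun hx2 i
        simp only [sig, ex] at hxv
        simp only [fwd, relu, ex, LinearMap.comp_apply, LinearMap.pi_apply,
          Matrix.mulVecLin_apply, Pi.add_apply]
        cases hσi : σ i with
        | true =>
          rw [hσi] at hxv
          have px : 0 < W m i ⬝ᵥ (M x + c) + b m i := by simpa using hxv
          simp only [hσi, if_true, LinearMap.proj_apply]
          rw [max_eq_right px.le]
          simp only [Matrix.mulVec, dotProduct_add]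
          ring
        | false =>
          rw [hσi] at hxv
          have px : ¬ (0 < W m i ⬝ᵥ (M x + c) + b m i) := by simpa using hxv
          push_neg at px
          rw [max_eq_left px]
          simp [hσi]
  obtain ⟨hconv, _⟩ := key L le_rfl
  have hset : {x : Fin (n 0) → ℝ | msig n W b L x = s} =
      {x : Fin (n 0) → ℝ | ∀ l, ∀ h : l < L,
        sig (W l) (b l) (fwd n W b l x) = s ⟨l, h.trans_le le_rfl⟩} := by
    ext x
    simp only [Set.mem_setOf_eq]
    constructor
    · intro h l hl
      exact congrFun h (⟨l, hl⟩ : Fin L)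
    · intro h
      funext l
      exact h l.val l.isLt
  rw [hset]
  exact hconv
end

section
/- In the multilayer setting with widths n_0, …, n_L and layers h = (h_1, …, h_L), the number of affine linear regions of the network f_h = h_L ∘ ⋯ ∘ h_1 satisfies N_{f_h} ≤ |𝒮_h|, i.e. the number of attained multi signatures bounds the minimal number of elements of a partition of ℝ^{n_0} into connected subsets on each of which f_h is affine linear. -/
open Matrix

/-- The number of affine linear regions of `f : ℝ^m → ℝ^{m'}`: the infimum of the
cardinalities of partitions of `ℝ^m` into connected subsets on each of which `f` is
affine linear (`⊤` if no such partition exists). -/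
noncomputable def numAffineRegions {m m' : ℕ} (f : (Fin m → ℝ) → (Fin m' → ℝ)) : ℕ∞ :=
  sInf (Set.encard '' {P : Set (Set (Fin m → ℝ)) |
    Setoid.IsPartition P ∧
    ∀ R ∈ P, IsConnected R ∧
      ∃ (A : Matrix (Fin m') (Fin m) ℝ) (c : Fin m' → ℝ), ∀ x ∈ R, f x = A *ᵥ x + c})

section Aux

variable (n : ℕ → ℕ) (W : ∀ l : ℕ, Matrix (Fin (n (l + 1))) (Fin (n l)) ℝ)
    (b : ∀ l : ℕ, Fin (n (l + 1)) → ℝ)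

/-- Pre-activation of a convex combination is the convex combination of pre-activations. -/
lemma pre_combo {k k' : ℕ} (M : Matrix (Fin k') (Fin k) ℝ) (c : Fin k' → ℝ)
    (u v : Fin k → ℝ) (t : ℝ) (i : Fin k') :
    M i ⬝ᵥ (fun j => t * u j + (1 - t) * v j) + c i
      = t * (M i ⬝ᵥ u + c i) + (1 - t) * (M i ⬝ᵥ v + c i) := by
  have h : M i ⬝ᵥ (fun j => t * u j + (1 - t) * v j)
      = t * (M i ⬝ᵥ u) + (1 - t) * (M i ⬝ᵥ v) := by
    simp only [dotProduct, Finset.mul_sum, ← Finset.sum_add_distrib]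
    exact Finset.sum_congr rfl (by intros; ring)
  rw [h]; ring

lemma combo_pos {a c t : ℝ} (ht0 : 0 ≤ t) (ht1 : t ≤ 1) (ha : 0 < a) (hc : 0 < c) :
    0 < t * a + (1 - t) * c := by
  have h1 : min a c ≤ a := min_le_left a c
  have h2 : min a c ≤ c := min_le_right a c
  have h3 : 0 < min a c := lt_min ha hc
  nlinarith

lemma combo_nonpos {a c t : ℝ} (ht0 : 0 ≤ t) (ht1 : t ≤ 1) (ha : a ≤ 0) (hc : c ≤ 0) :
    t * a + (1 - t) * c ≤ 0 := by nlinarith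

lemma sig_combo {k k' : ℕ} (M : Matrix (Fin k') (Fin k) ℝ) (c : Fin k' → ℝ)
    (u v : Fin k → ℝ) (t : ℝ) (ht0 : 0 ≤ t) (ht1 : t ≤ 1)
    (hs : sig M c u = sig M c v) :
    sig M c (fun j => t * u j + (1 - t) * v j) = sig M c u ∧
    relu M c (fun j => t * u j + (1 - t) * v j)
      = fun i => t * relu M c u i + (1 - t) * relu M c v i := by
  have hiff : ∀ i, (0 < M i ⬝ᵥ u + c i) ↔ (0 < M i ⬝ᵥ v + c i) := by
    intro i
    have := congrFun hs i
    simpa [sig] using this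
  constructor
  · funext i
    simp only [sig, pre_combo, decide_eq_decide]
    rcases lt_or_ge 0 (M i ⬝ᵥ u + c i) with hpos | hneg
    · have hv := (hiff i).mp hpos
      constructor
      · intro _; exact hpos
      · intro _; exact combo_pos ht0 ht1 hpos hv
    · have hv : M i ⬝ᵥ v + c i ≤ 0 := by
        by_contra h; exact absurd ((hiff i).mpr (lt_of_not_ge h)) (not_lt.mpr hneg)
      constructor
      · intro h; exact absurd h (not_lt.mpr (combo_nonpos ht0 ht1 hneg hv))
      · intro h; exact absurd h (not_lt.mpr hneg)
  · funext i
    simp only [relu, pre_combo]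
    rcases lt_or_ge 0 (M i ⬝ᵥ u + c i) with hpos | hneg
    · have hv := (hiff i).mp hpos
      rw [max_eq_right (le_of_lt hpos), max_eq_right (le_of_lt hv),
        max_eq_right (le_of_lt (combo_pos ht0 ht1 hpos hv))]
    · have hv : M i ⬝ᵥ v + c i ≤ 0 := by
        by_contra h; exact absurd ((hiff i).mpr (lt_of_not_ge h)) (not_lt.mpr hneg)
      rw [max_eq_left hneg, max_eq_left hv, max_eq_left (combo_nonpos ht0 ht1 hneg hv)]
      ring

lemma fwd_combo (L : ℕ) (x y : Fin (n 0) → ℝ) (t : ℝ) (ht0 : 0 ≤ t) (ht1 : t ≤ 1)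
    (hxy : msig n W b L x = msig n W b L y) :
    ∀ m, m ≤ L → fwd n W b m (fun j => t * x j + (1 - t) * y j)
      = fun i => t * fwd n W b m x i + (1 - t) * fwd n W b m y i := by
  intro m
  induction m with
  | zero => intro _; rfl
  | succ m ih =>
    intro hm
    have hmL : m < L := hm
    have ihm := ih (le_of_lt hmL)
    have hs : sig (W m) (b m) (fwd n W b m x) = sig (W m) (b m) (fwd n W b m y) :=
      congrFun hxy ⟨m, hmL⟩
    show relu (W m) (b m) (fwd n W b m (fun j => t * x j + (1 - t) * y j)) = _
    rw [ihm]
    exact (sig_combo (W m) (b m) _ _ t ht0 ht1 hs).2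

lemma msig_combo (L : ℕ) (x y : Fin (n 0) → ℝ) (t : ℝ) (ht0 : 0 ≤ t) (ht1 : t ≤ 1)
    (hxy : msig n W b L x = msig n W b L y) :
    msig n W b L (fun j => t * x j + (1 - t) * y j) = msig n W b L x := by
  funext l
  have hlL : (l : ℕ) < L := l.isLt
  have hs : sig (W l) (b l) (fwd n W b l x) = sig (W l) (b l) (fwd n W b l y) :=
    congrFun hxy l
  show sig (W l) (b l) (fwd n W b l (fun j => t * x j + (1 - t) * y j)) = _
  rw [fwd_combo n W b L x y t ht0 ht1 hxy l (le_of_lt hlL)]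
  exact (sig_combo (W l) (b l) _ _ t ht0 ht1 hs).1

/-- The fiber of `msig` is convex. -/
lemma fiber_convex (L : ℕ) (s : ∀ l : Fin L, Fin (n (l.val + 1)) → Bool) :
    Convex ℝ {x | msig n W b L x = s} := by
  intro x hx y hy a c ha hc hac
  have hc' : c = 1 - a := by linarith
  have hpt : a • x + c • y = fun j => a * x j + (1 - a) * y j := by
    funext j; simp [hc']
  have ha1 : a ≤ 1 := by linarith
  have hxy : msig n W b L x = msig n W b L y := hx.trans hy.symm
  show msig n W b L (a • x + c • y) = s
  rw [hpt, msig_combo n W b L x y a ha ha1 hxy]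
  exact hx

/-- On a fiber of `msig`, each `fwd m` (`m ≤ L`) is affine. -/
lemma fwd_affine_on_fiber (L : ℕ) (s : ∀ l : Fin L, Fin (n (l.val + 1)) → Bool) :
    ∀ m, m ≤ L → ∃ (A : Matrix (Fin (n m)) (Fin (n 0)) ℝ) (c : Fin (n m) → ℝ),
      ∀ x, msig n W b L x = s → fwd n W b m x = A *ᵥ x + c := by
  intro m
  induction m with
  | zero =>
    intro _
    exact ⟨1, 0, fun x _ => by simp [fwd, Matrix.one_mulVec]⟩
  | succ m ih =>
    intro hm
    have hmL : m < L := hm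
    obtain ⟨A, c, hAc⟩ := ih (le_of_lt hmL)
    refine ⟨fun i j => if s ⟨m, hmL⟩ i = true then (W m * A) i j else 0,
      fun i => if s ⟨m, hmL⟩ i = true then W m i ⬝ᵥ c + b m i else 0, ?_⟩
    intro x hx
    have hs : sig (W m) (b m) (fwd n W b m x) = s ⟨m, hmL⟩ := congrFun hx ⟨m, hmL⟩
    funext i
    have hsum : (fun j => if s ⟨m, hmL⟩ i = true then (W m * A) i j else 0) ⬝ᵥ x
        = if s ⟨m, hmL⟩ i = true then (W m * A) i ⬝ᵥ x else 0 := by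
      by_cases h : s ⟨m, hmL⟩ i = true <;> simp [dotProduct, h]
    have hwa : (W m * A) i ⬝ᵥ x = W m i ⬝ᵥ (A *ᵥ x) := by
      have h1 := congrFun (Matrix.mulVec_mulVec x (W m) A) i
      exact h1.symm
    have hpre : W m i ⬝ᵥ fwd n W b m x + b m i
        = (W m * A) i ⬝ᵥ x + (W m i ⬝ᵥ c + b m i) := by
      rw [hAc x hx, dotProduct_add, hwa]; ring
    have lhs_eq : fwd n W b (m + 1) x i = max 0 (W m i ⬝ᵥ fwd n W b m x + b m i) := rfl
    have rhs_eq : ((fun i j => if s ⟨m, hmL⟩ i = true then (W m * A) i j else 0) *ᵥ x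
        + fun i => if s ⟨m, hmL⟩ i = true then W m i ⬝ᵥ c + b m i else 0) i
        = (if s ⟨m, hmL⟩ i = true then (W m * A) i ⬝ᵥ x else 0)
          + (if s ⟨m, hmL⟩ i = true then W m i ⬝ᵥ c + b m i else 0) := by
      simp only [Pi.add_apply, Matrix.mulVec, hsum]
    rw [lhs_eq, rhs_eq]
    by_cases h : s ⟨m, hmL⟩ i = true
    · have hpos : 0 < W m i ⬝ᵥ fwd n W b m x + b m i := by
        have h2 := congrFun hs i
        rw [h] at h2
        simpa [sig] using h2
      rw [max_eq_right (le_of_lt hpos), hpre]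
      simp [h]
    · have hneg : W m i ⬝ᵥ fwd n W b m x + b m i ≤ 0 := by
        have h2 := congrFun hs i
        by_contra hcon
        have hp : 0 < W m i ⬝ᵥ fwd n W b m x + b m i := lt_of_not_ge hcon
        rw [show sig (W m) (b m) (fwd n W b m x) i = true by simpa [sig] using hp] at h2
        exact h (h2.symm)
      rw [max_eq_left hneg]
      simp [h]

end Aux

/-- In the multilayer setting with widths `n 0, …, n L` and layers `h = (h_1, …, h_L)`,
the number of affine linear regions of the network `f_h = h_L ∘ ⋯ ∘ h_1` is bounded by the
number of attained multi signatures: `N_{f_h} ≤ |𝒮_h|`. -/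
theorem stmt7 (L : ℕ) (hL : 0 < L) (n : ℕ → ℕ) (hn : ∀ l, 0 < n l)
    (W : ∀ l : ℕ, Matrix (Fin (n (l + 1))) (Fin (n l)) ℝ)
    (b : ∀ l : ℕ, Fin (n (l + 1)) → ℝ) :
    numAffineRegions (fwd n W b L) ≤ (Set.range (msig n W b L)).encard := by
  classical
  set S := Set.range (msig n W b L) with hS
  set P : Set (Set (Fin (n 0) → ℝ)) := (fun s => msig n W b L ⁻¹' {s}) '' S with hP
  have hPmem : Set.encard P ∈ Set.encard '' {Q : Set (Set (Fin (n 0) → ℝ)) |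
      Setoid.IsPartition Q ∧
      ∀ R ∈ Q, IsConnected R ∧
        ∃ (A : Matrix (Fin (n L)) (Fin (n 0)) ℝ) (c : Fin (n L) → ℝ),
          ∀ x ∈ R, fwd n W b L x = A *ᵥ x + c} := by
    refine ⟨P, ⟨?_, ?_⟩, rfl⟩
    · constructor
      · rintro ⟨s, ⟨x0, hx0⟩, hfib⟩
        have hx0' : x0 ∈ (fun s => msig n W b L ⁻¹' {s}) s := hx0
        rw [hfib] at hx0'
        exact hx0'
      · intro a
        refine ⟨msig n W b L ⁻¹' {msig n W b L a}, ⟨⟨msig n W b L a, ⟨a, rfl⟩, rfl⟩, rfl⟩, ?_⟩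
        rintro R' ⟨⟨s', _, rfl⟩, ha'⟩
        have : msig n W b L a = s' := ha'
        rw [this]
    · rintro R ⟨s, hsS, rfl⟩
      obtain ⟨x0, hx0⟩ := hsS
      constructor
      · refine (fiber_convex n W b L s).isConnected ?_
        exact ⟨x0, hx0⟩
      · obtain ⟨A, c, hAc⟩ := fwd_affine_on_fiber n W b L s L (le_refl L)
        exact ⟨A, c, fun x hx => hAc x hx⟩
  have h1 : numAffineRegions (fwd n W b L) ≤ Set.encard P := sInf_le hPmem
  refine h1.trans ?_
  exact Set.encard_image_le _ _
end

section
/- In the multilayer setting with widths n_0, …, n_L and layers h = (h_1, …, h_L), for every i ∈ {1, …, L-1}, |𝒮^{(i+1)}_h| ≤ Σ_{(s_1, …, s_i) ∈ 𝒮^{(i)}_h} Σ_{j=0}^{min(n_0, |s_1|, …, |s_i|)} C(n_{i+1}, j). -/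
/-!
A signature of length `i + 1` is a signature `s` of length `i` followed by a signature of layer
`i + 1` at an input of the region `{x | S^{(i)}(x) = s}`, so it suffices to count the latter region
by region. On such a region every layer acts affinely, so `h_i ∘ ⋯ ∘ h_1` is an affine function of
the input `x ∈ ℝ^{n_0}`, and also of the output of any layer `l ≤ i`, which lies in the coordinate
subspace of the `|s_l|` units active in `s_l`. The signatures of layer `i + 1` there are thus strict
sign patterns of `n_{i+1}` affine functions on a space of dimension `d = min(n_0, |s_1|, …, |s_i|)`,
and by the Sauer–Shelah lemma there are at most `∑_{j ≤ d} C(n_{i+1}, j)` of them: the linear parts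
of `d + 1` affine functions `f_j` on a `d`-dimensional space are dependent, so some `∑ c_j f_j` with
`c ≠ 0` is constant; it is positive where exactly the `f_j` with `c_j > 0` are positive and
nonpositive where exactly the others are, so the family of positivity sets shatters no `d + 1`
indices.
-/

open Matrix

open Finset Module

section SignPatterns

variable {V : Type*} [AddCommGroup V] [Module ℝ V] {k : ℕ}

noncomputable def positivitySets (f : V →ᵃ[ℝ] (Fin k → ℝ)) : Finset (Finset (Fin k)) :=
  (Set.toFinite (Set.range fun x => univ.filter fun j => 0 < f x j)).toFinset

lemma exists_linear_relation_of_finrank_lt [FiniteDimensional ℝ V] (f : V →ᵃ[ℝ] (Fin k → ℝ))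
    {s : Finset (Fin k)} (hs : finrank ℝ V < #s) :
    ∃ c : Fin k → ℝ, (∀ v, ∑ j ∈ s, c j * f.linear v j = 0) ∧ ∃ j ∈ s, c j ≠ 0 := by
  have hdep : ¬ LinearIndepOn ℝ (fun j => LinearMap.proj j ∘ₗ f.linear) (s : Set (Fin k)) := by
    intro hind
    have := hind.fintype_card_le_finrank
    simp only [Subspace.dual_finrank_eq, Finset.coe_sort_coe, Fintype.card_coe] at this
    omega
  obtain ⟨c, hc, hne⟩ := not_linearIndepOn_finset_iff.1 hdep
  refine ⟨c, fun v => ?_, hne⟩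
  simpa using LinearMap.congr_fun hc v

lemma sum_mul_apply_eq_of_linear_relation (f : V →ᵃ[ℝ] (Fin k → ℝ)) {s : Finset (Fin k)}
    {c : Fin k → ℝ} (hc : ∀ v, ∑ j ∈ s, c j * f.linear v j = 0) (x y : V) :
    ∑ j ∈ s, c j * f x j = ∑ j ∈ s, c j * f y j := by
  have key : ∀ z, ∑ j ∈ s, c j * f z j = ∑ j ∈ s, c j * f 0 j := by
    intro z
    simp only [congrFun f.decomp z, Pi.add_apply, mul_add, sum_add_distrib, hc, zero_add]
  rw [key x, key y]

lemma not_shatters_of_linear_relation (f : V →ᵃ[ℝ] (Fin k → ℝ)) {s : Finset (Fin k)}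
    {c : Fin k → ℝ} (hc : ∀ v, ∑ j ∈ s, c j * f.linear v j = 0)
    {j₀ : Fin k} (hj₀ : j₀ ∈ s) (hcj₀ : 0 < c j₀) : ¬ (positivitySets f).Shatters s := by
  intro hs
  obtain ⟨_, hx, hxP⟩ := hs (filter_subset (fun j => 0 < c j) s)
  obtain ⟨_, hy, hyP⟩ := hs (sdiff_subset (s := s) (t := s.filter fun j => 0 < c j))
  simp only [positivitySets, Set.Finite.mem_toFinset, Set.mem_range] at hx hy
  obtain ⟨x, rfl⟩ := hx
  obtain ⟨y, rfl⟩ := hy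
  have hpos : 0 < ∑ j ∈ s, c j * f x j := by
    refine sum_pos' (fun j hj => ?_) ⟨j₀, hj₀, ?_⟩
    · have := congrArg (j ∈ ·) hxP
      simp only [mem_inter, mem_filter, mem_univ, true_and, hj, eq_iff_iff] at this
      by_cases hcj : 0 < c j
      · exact (mul_pos hcj (this.2 hcj)).le
      · exact mul_nonneg_of_nonpos_of_nonpos (not_lt.1 hcj) (not_lt.1 fun h => hcj (this.1 h))
    · have := congrArg (j₀ ∈ ·) hxP
      simp only [mem_inter, mem_filter, mem_univ, true_and, hj₀, eq_iff_iff] at this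
      exact mul_pos hcj₀ (this.2 hcj₀)
  have hnonpos : ∑ j ∈ s, c j * f y j ≤ 0 := by
    refine sum_nonpos fun j hj => ?_
    have := congrArg (j ∈ ·) hyP
    simp only [mem_inter, mem_sdiff, mem_filter, mem_univ, true_and, hj, eq_iff_iff] at this
    by_cases hcj : 0 < c j
    · exact mul_nonpos_of_nonneg_of_nonpos hcj.le (not_lt.1 fun h => this.1 h hcj)
    · exact mul_nonpos_of_nonpos_of_nonneg (not_lt.1 hcj) (this.2 hcj).le
  linarith [sum_mul_apply_eq_of_linear_relation f hc x y]

lemma not_shatters_of_finrank_lt [FiniteDimensional ℝ V] (f : V →ᵃ[ℝ] (Fin k → ℝ))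
    {s : Finset (Fin k)} (hs : finrank ℝ V < #s) : ¬ (positivitySets f).Shatters s := by
  obtain ⟨c, hc, j₀, hj₀, hcj₀⟩ := exists_linear_relation_of_finrank_lt f hs
  rcases hcj₀.lt_or_gt with hneg | hpos
  · refine not_shatters_of_linear_relation f (c := -c) (fun v => ?_) hj₀ (neg_pos.2 hneg)
    simp [hc]
  · exact not_shatters_of_linear_relation f hc hj₀ hpos

lemma vcDim_positivitySets_le [FiniteDimensional ℝ V] (f : V →ᵃ[ℝ] (Fin k → ℝ)) :
    (positivitySets f).vcDim ≤ finrank ℝ V :=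
  Finset.sup_le fun _ hs =>
    not_lt.1 fun hlt => not_shatters_of_finrank_lt f hlt (mem_shatterer.1 hs)

lemma card_positivitySets_le [FiniteDimensional ℝ V] (f : V →ᵃ[ℝ] (Fin k → ℝ)) :
    #(positivitySets f) ≤ ∑ j ∈ range (finrank ℝ V + 1), k.choose j := by
  calc #(positivitySets f) ≤ #(positivitySets f).shatterer := card_le_card_shatterer _
    _ ≤ ∑ j ∈ Iic (positivitySets f).vcDim, (Fintype.card (Fin k)).choose j :=
      card_shatterer_le_sum_vcDim
    _ ≤ ∑ j ∈ range (finrank ℝ V + 1), k.choose j := by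
      rw [Fintype.card_fin, Nat.range_succ_eq_Iic]
      exact sum_le_sum_of_subset (Iic_subset_Iic.2 (vcDim_positivitySets_le f))

lemma ncard_range_signPattern_le [FiniteDimensional ℝ V] (f : V →ᵃ[ℝ] (Fin k → ℝ)) :
    (Set.range fun x j => decide (0 < f x j)).ncard ≤
      ∑ j ∈ range (finrank ℝ V + 1), k.choose j := by
  have hinj : Function.Injective fun (p : Fin k → Bool) => univ.filter fun j => p j := by
    intro p q h
    funext j
    simpa using congrArg (j ∈ ·) h
  rw [← Set.ncard_image_of_injective _ hinj, ← Set.range_comp]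
  refine le_trans (le_of_eq ?_) (card_positivitySets_le f)
  rw [positivitySets, ← Set.ncard_coe_finset, Set.Finite.coe_toFinset]
  simp [Function.comp_def]

lemma ncard_image_signPattern_le_of_subset [FiniteDimensional ℝ V] (f : V →ᵃ[ℝ] (Fin k → ℝ))
    {U : Submodule ℝ V} {S : Set V} (hS : S ⊆ U) :
    ((fun x j => decide (0 < f x j)) '' S).ncard ≤ ∑ j ∈ range (finrank ℝ U + 1), k.choose j := by
  refine le_trans (Set.ncard_le_ncard ?_ (Set.toFinite _))
    (ncard_range_signPattern_le (f.comp U.subtype.toAffineMap))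
  rintro _ ⟨x, hx, rfl⟩
  exact ⟨⟨x, hS hx⟩, rfl⟩

end SignPatterns

section Network

variable {m m' : ℕ}

noncomputable def maskMatrix (p : Fin m → Bool) : Matrix (Fin m) (Fin m) ℝ :=
  diagonal fun j => if p j then 1 else 0

noncomputable def affineLayer (W : Matrix (Fin m') (Fin m) ℝ) (b : Fin m' → ℝ) :
    (Fin m → ℝ) →ᵃ[ℝ] (Fin m' → ℝ) :=
  W.mulVecLin.toAffineMap + AffineMap.const ℝ _ b

lemma relu_eq_maskMatrix_mulVec {W : Matrix (Fin m') (Fin m) ℝ} {b : Fin m' → ℝ}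
    {y : Fin m → ℝ} {p : Fin m' → Bool} (h : sig W b y = p) :
    relu W b y = maskMatrix p *ᵥ affineLayer W b y := by
  funext j
  have hj : decide (0 < W j ⬝ᵥ y + b j) = p j := congrFun h j
  rw [maskMatrix, mulVec_diagonal]
  change max 0 (W j ⬝ᵥ y + b j) = _ * (W j ⬝ᵥ y + b j)
  cases hp : p j <;> simp only [hp, decide_eq_true_eq, decide_eq_false_iff_not, not_lt] at hj
  · simp [hj]
  · simp [hj.le]

lemma finrank_range_maskMatrix (p : Fin m → Bool) :
    finrank ℝ (LinearMap.range (maskMatrix p).mulVecLin) = cnt p := by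
  rw [← rank, maskMatrix, rank_diagonal, Fintype.card_subtype, cnt]
  congr 1
  ext j
  cases p j <;> simp

end Network

section Signatures

variable (n : ℕ → ℕ) (W : ∀ l : ℕ, Matrix (Fin (n (l + 1))) (Fin (n l)) ℝ)
  (b : ∀ l : ℕ, Fin (n (l + 1)) → ℝ)

lemma msig_succ (i : ℕ) (x : Fin (n 0) → ℝ) :
    msig n W b (i + 1) x = Fin.snoc (α := fun l : Fin (i + 1) => Fin (n (l.val + 1)) → Bool)
      (msig n W b i x) (sig (W i) (b i) (fwd n W b i x)) := by
  funext l
  induction l using Fin.lastCases with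
  | last => rw [Fin.snoc_last]; rfl
  | cast l => rw [Fin.snoc_castSucc]; rfl

lemma ncard_range_msig_succ_le (i : ℕ) :
    (Set.range (msig n W b (i + 1))).ncard ≤
      ∑ s ∈ (Set.toFinite (Set.range (msig n W b i))).toFinset,
        ((fun x => sig (W i) (b i) (fwd n W b i x)) '' {x | msig n W b i x = s}).ncard := by
  set S := (Set.toFinite (Set.range (msig n W b i))).toFinset
  set E := fun s => (fun x => sig (W i) (b i) (fwd n W b i x)) '' {x | msig n W b i x = s}
  have hcover : Set.range (msig n W b (i + 1)) ⊆
      ⋃ s ∈ S, Fin.snoc (α := fun l : Fin (i + 1) => Fin (n (l.val + 1)) → Bool) s '' E s := by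
    rintro _ ⟨x, rfl⟩
    refine Set.mem_biUnion (x := msig n W b i x) (by simp [S]) ⟨_, ⟨x, rfl, rfl⟩, ?_⟩
    exact (msig_succ n W b i x).symm
  exact (Set.ncard_le_ncard hcover (Set.toFinite _)).trans <|
    (Finset.set_ncard_biUnion_le _ _).trans <|
      sum_le_sum fun s _ => Set.ncard_image_le (Set.toFinite _)

lemma exists_affineMap_fwd_eq_of_msig_eq {i m : ℕ}
    (s : ∀ l : Fin i, Fin (n (l.val + 1)) → Bool) (hm : m ≤ i) :
    ∃ g : (Fin (n m) → ℝ) →ᵃ[ℝ] (Fin (n i) → ℝ),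
      ∀ x, msig n W b i x = s → fwd n W b i x = g (fwd n W b m x) := by
  suffices ∀ j, m ≤ j → j ≤ i → ∃ g : (Fin (n m) → ℝ) →ᵃ[ℝ] (Fin (n j) → ℝ),
      ∀ x, msig n W b i x = s → fwd n W b j x = g (fwd n W b m x) from this i hm le_rfl
  intro j hmj
  induction j, hmj using Nat.le_induction with
  | base => exact fun _ => ⟨AffineMap.id ℝ _, fun _ _ => rfl⟩
  | succ j _ ih =>
    intro hji
    obtain ⟨g, hg⟩ := ih (by omega)
    refine ⟨((maskMatrix (s ⟨j, hji⟩)).mulVecLin.toAffineMap.comp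
      (affineLayer (W j) (b j))).comp g, fun x hx => ?_⟩
    rw [AffineMap.comp_apply, ← hg x hx]
    exact relu_eq_maskMatrix_mulVec (congrFun hx ⟨j, hji⟩)

lemma fwd_succ_mem_range_maskMatrix {i : ℕ} {x : Fin (n 0) → ℝ}
    {s : ∀ l : Fin i, Fin (n (l.val + 1)) → Bool} (hx : msig n W b i x = s) (l : Fin i) :
    fwd n W b (l + 1) x ∈ LinearMap.range (maskMatrix (s l)).mulVecLin :=
  ⟨_, (relu_eq_maskMatrix_mulVec (congrFun hx l)).symm⟩

lemma ncard_signPatterns_on_fiber_le {i m : ℕ} (hm : m ≤ i)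
    (s : ∀ l : Fin i, Fin (n (l.val + 1)) → Bool) (U : Submodule ℝ (Fin (n m) → ℝ))
    (hU : ∀ x, msig n W b i x = s → fwd n W b m x ∈ U) :
    ((fun x => sig (W i) (b i) (fwd n W b i x)) '' {x | msig n W b i x = s}).ncard ≤
      ∑ j ∈ range (finrank ℝ U + 1), (n (i + 1)).choose j := by
  obtain ⟨g, hg⟩ := exists_affineMap_fwd_eq_of_msig_eq n W b s hm
  refine le_trans (Set.ncard_le_ncard ?_ (Set.toFinite _))
    (ncard_image_signPattern_le_of_subset ((affineLayer (W i) (b i)).comp g)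
      (S := fwd n W b m '' {x | msig n W b i x = s}) (by rintro _ ⟨x, hx, rfl⟩; exact hU x hx))
  rintro _ ⟨x, hx, rfl⟩
  exact ⟨_, ⟨x, hx, rfl⟩, by
    change _ = sig (W i) (b i) (fwd n W b i x)
    rw [hg x hx]
    rfl⟩

lemma ncard_signPatterns_on_fiber_le_minAct {i : ℕ}
    (s : ∀ l : Fin i, Fin (n (l.val + 1)) → Bool) :
    ((fun x => sig (W i) (b i) (fwd n W b i x)) '' {x | msig n W b i x = s}).ncard ≤
      ∑ j ∈ range (minAct n i s + 1), (n (i + 1)).choose j := by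
  have hmono : ∀ {d d'}, d ≤ d' →
      ∑ j ∈ range (d + 1), (n (i + 1)).choose j ≤ ∑ j ∈ range (d' + 1), (n (i + 1)).choose j :=
    fun h => sum_le_sum_of_subset (range_subset_range.2 (by omega))
  rcases (fold_min_le (minAct n i s)).1 le_rfl with h0 | ⟨l, -, hl⟩
  · refine (ncard_signPatterns_on_fiber_le n W b (Nat.zero_le i) s ⊤ fun _ _ => trivial).trans ?_
    rw [finrank_top, finrank_fin_fun]
    exact hmono h0
  · refine (ncard_signPatterns_on_fiber_le n W b l.isLt s _
      fun _ hx => fwd_succ_mem_range_maskMatrix n W b hx l).trans ?_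
    rw [finrank_range_maskMatrix]
    exact hmono hl

end Signatures

theorem stmt9_general (n : ℕ → ℕ)
    (W : ∀ l : ℕ, Matrix (Fin (n (l + 1))) (Fin (n l)) ℝ)
    (b : ∀ l : ℕ, Fin (n (l + 1)) → ℝ)
    (i : ℕ) :
    (Set.range (msig n W b (i + 1))).ncard ≤
      ∑ s ∈ (Set.toFinite (Set.range (msig n W b i))).toFinset,
        ∑ j ∈ Finset.range (minAct n i s + 1), (n (i + 1)).choose j :=
  (ncard_range_msig_succ_le n W b i).trans
    (sum_le_sum fun s _ => ncard_signPatterns_on_fiber_le_minAct n W b s)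

/-- In the multilayer setting with widths `n 0, …, n L` and layers `h = (h_1, …, h_L)`,
for every `i ∈ {1, …, L-1}`,
`|𝒮^{(i+1)}_h| ≤ ∑_{(s_1, …, s_i) ∈ 𝒮^{(i)}_h} ∑_{j=0}^{min(n_0,|s_1|,…,|s_i|)} C(n_{i+1}, j)`. -/
theorem stmt9 (L : ℕ) (hL : 0 < L) (n : ℕ → ℕ) (hn : ∀ l, 0 < n l)
    (W : ∀ l : ℕ, Matrix (Fin (n (l + 1))) (Fin (n l)) ℝ)
    (b : ∀ l : ℕ, Fin (n (l + 1)) → ℝ)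
    (i : ℕ) (hi1 : 1 ≤ i) (hi2 : i < L) :
    (Set.range (msig n W b (i + 1))).ncard ≤
      ∑ s ∈ (Set.toFinite (Set.range (msig n W b i))).toFinset,
        ∑ j ∈ Finset.range (minAct n i s + 1), (n (i + 1)).choose j :=
  stmt9_general n W b i
end

section
/- In the multilayer setting with widths n_0, …, n_L and layers h = (h_1, …, h_L), the number of attained multi signatures satisfies the Montúfar bound |𝒮_h| ≤ ∏_{l=1}^{L} Σ_{j=0}^{min(n_0, …, n_{l-1})} C(n_l, j). -/
open Matrix

/-- `min(n 0, …, n l)`. -/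
def minWidth (n : ℕ → ℕ) (l : ℕ) : ℕ := (Finset.range (l + 1)).fold min (n 0) n

/-!
On the inputs whose first `L` layer signatures are fixed, the network agrees with an affine map
(each ReLU acts as the identity or as zero), so the image of that region is convex and its
vector span has dimension at most `min(n_0, …, n_L)`, the map factoring through every width.
The signatures of layer `L + 1` on it are the sign patterns of `n_{L+1}` affine functionals on a
convex set of dimension `d`, and there are at most `∑_{j ≤ d} C(N, j)` of those: forgetting one
functional `φ`, a pattern has two extensions only if its convex cell meets both sides of `φ = 0`,
hence meets the hyperplane, which gives Pascal's recursion `B(N+1, d) ≤ B(N, d) + B(N, d-1)`.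
Multiplying the fibre bounds over the layers gives the product.
-/

open Finset Module

lemma sum_range_choose_succ (N d : ℕ) :
    ∑ j ∈ range (d + 1), (N + 1).choose j
      = ∑ j ∈ range (d + 1), N.choose j + ∑ j ∈ range d, N.choose j := by
  rw [sum_range_succ', sum_range_succ' (fun j => N.choose j)]
  simp only [Nat.choose_succ_succ', sum_add_distrib, Nat.choose_zero_right]
  ring

section SignPattern

variable {E : Type*} [AddCommGroup E] [Module ℝ E]

noncomputable def signPattern {N : ℕ} (f : Fin N → E →ᵃ[ℝ] ℝ) (x : E) : Fin N → Bool :=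
  fun i => decide (0 < f i x)

lemma convex_setOf_decide_pos_eq (φ : E →ᵃ[ℝ] ℝ) (β : Bool) :
    Convex ℝ {x | decide (0 < φ x) = β} := by
  cases β
  · have : {x | decide (0 < φ x) = false} = φ ⁻¹' Set.Iic 0 := by ext; simp
    rw [this]
    exact (convex_Iic 0).affine_preimage φ
  · have : {x | decide (0 < φ x) = true} = φ ⁻¹' Set.Ioi 0 := by ext; simp
    rw [this]
    exact (convex_Ioi 0).affine_preimage φ

lemma convex_signPattern_preimage {N : ℕ} (f : Fin N → E →ᵃ[ℝ] ℝ) (u : Fin N → Bool) :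
    Convex ℝ (signPattern f ⁻¹' {u}) := by
  have : signPattern f ⁻¹' {u} = ⋂ i, {x | decide (0 < f i x) = u i} := by
    ext x; simp [signPattern, funext_iff]
  rw [this]
  exact convex_iInter fun i => convex_setOf_decide_pos_eq (f i) (u i)

lemma Convex.exists_apply_eq_zero {C : Set E} (hC : Convex ℝ C) (φ : E →ᵃ[ℝ] ℝ) {x y : E}
    (hx : x ∈ C) (hy : y ∈ C) (hφx : 0 < φ x) (hφy : φ y ≤ 0) : ∃ z ∈ C, φ z = 0 := by
  have hgap : 0 < φ x - φ y := by linarith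
  refine ⟨AffineMap.lineMap x y (φ x / (φ x - φ y)), hC.lineMap_mem hx hy ⟨?_, ?_⟩, ?_⟩
  · positivity
  · rw [div_le_one hgap]; linarith
  · rw [AffineMap.apply_lineMap, AffineMap.lineMap_apply_ring']
    field_simp
    ring

lemma finrank_vectorSpan_inter_zero_lt [FiniteDimensional ℝ E] {A : Set E} (φ : E →ᵃ[ℝ] ℝ)
    {x z : E} (hx : x ∈ A) (hz : z ∈ A) (hφx : φ x ≠ 0) (hφz : φ z = 0) :
    finrank ℝ (vectorSpan ℝ (A ∩ {y | φ y = 0})) < finrank ℝ (vectorSpan ℝ A) := by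
  have hker : vectorSpan ℝ (A ∩ {y | φ y = 0}) ≤ LinearMap.ker φ.linear := by
    rw [vectorSpan_def, Submodule.span_le]
    rintro _ ⟨p, ⟨-, hp : φ p = 0⟩, q, ⟨-, hq : φ q = 0⟩, rfl⟩
    rw [SetLike.mem_coe, LinearMap.mem_ker, AffineMap.linearMap_vsub, hp, hq, vsub_self]
  have hxz : x -ᵥ z ∉ vectorSpan ℝ (A ∩ {y | φ y = 0}) := fun h => by
    have := hker h
    rw [LinearMap.mem_ker, AffineMap.linearMap_vsub, hφz, vsub_eq_sub, sub_zero] at this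
    exact hφx this
  refine Submodule.finrank_lt_finrank_of_lt (lt_of_le_of_ne
    (vectorSpan_mono ℝ Set.inter_subset_left) fun h => hxz ?_)
  rw [h]
  exact vsub_mem_vectorSpan ℝ hx hz

theorem ncard_image_signPattern_le [FiniteDimensional ℝ E] {N : ℕ} (f : Fin N → E →ᵃ[ℝ] ℝ)
    {A : Set E} (hA : Convex ℝ A) {d : ℕ} (hd : finrank ℝ (vectorSpan ℝ A) ≤ d) :
    (signPattern f '' A).ncard ≤ ∑ j ∈ range (d + 1), N.choose j := by
  induction N generalizing A d with
  | zero =>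
    exact (Set.ncard_le_one_of_subsingleton _).trans (by simp [sum_range_succ'])
  | succ N ih =>
    set g : Fin N → E →ᵃ[ℝ] ℝ := fun i => f i.castSucc
    set φ := f (Fin.last N)
    set Gpos := signPattern g '' (A ∩ {x | 0 < φ x})
    set Gnonpos := signPattern g '' (A ∩ {x | φ x ≤ 0})
    have hsnoc (x : E) : signPattern f x = Fin.snoc (signPattern g x) (decide (0 < φ x)) := by
      funext i
      induction i using Fin.lastCases <;> simp [signPattern, g, φ]
    have hsplit :
        signPattern f '' A ⊆ (Fin.snoc · true) '' Gpos ∪ (Fin.snoc · false) '' Gnonpos := by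
      rintro _ ⟨x, hx, rfl⟩
      rw [hsnoc]
      by_cases h : 0 < φ x
      · exact .inl ⟨_, ⟨x, ⟨hx, h⟩, rfl⟩, by simp [h]⟩
      · exact .inr ⟨_, ⟨x, ⟨hx, not_lt.mp h⟩, rfl⟩, by simp [h]⟩
    have hunion : Gpos ∪ Gnonpos ⊆ signPattern g '' A :=
      Set.union_subset (Set.image_mono Set.inter_subset_left)
        (Set.image_mono Set.inter_subset_left)
    -- a cell meeting both sides of `φ = 0` is convex, hence meets the hyperplane
    have hsub : Gpos ∩ Gnonpos ⊆ signPattern g '' (A ∩ {x | φ x = 0}) := by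
      rintro _ ⟨⟨x, ⟨hxA, hx⟩, rfl⟩, ⟨y, ⟨hyA, hy⟩, hyx⟩⟩
      obtain ⟨z, ⟨hzA, hzx⟩, hz⟩ :=
        (hA.inter (convex_signPattern_preimage g (signPattern g x))).exists_apply_eq_zero φ
          ⟨hxA, rfl⟩ ⟨hyA, hyx⟩ hx hy
      exact ⟨z, ⟨hzA, hz⟩, hzx⟩
    have hinter : (Gpos ∩ Gnonpos).ncard ≤ ∑ j ∈ range d, N.choose j := by
      obtain hempty | ⟨u, hu⟩ := (Gpos ∩ Gnonpos).eq_empty_or_nonempty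
      · simp [hempty]
      obtain ⟨x, ⟨hxA, hx⟩, -⟩ := hu.1
      obtain ⟨z, ⟨hzA, hz⟩, -⟩ := hsub hu
      have hlt := finrank_vectorSpan_inter_zero_lt φ hxA hzA hx.ne' hz
      calc (Gpos ∩ Gnonpos).ncard ≤ (signPattern g '' (A ∩ {x | φ x = 0})).ncard :=
            Set.ncard_le_ncard hsub (Set.toFinite _)
        _ ≤ ∑ j ∈ range (d - 1 + 1), N.choose j :=
            ih g (A := A ∩ {x | φ x = 0}) (hA.inter ((convex_singleton 0).affine_preimage φ))
              (by omega)
        _ = ∑ j ∈ range d, N.choose j := by rw [Nat.sub_add_cancel (by omega)]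
    calc (signPattern f '' A).ncard
        ≤ ((Fin.snoc · true) '' Gpos ∪ (Fin.snoc · false) '' Gnonpos).ncard :=
          Set.ncard_le_ncard hsplit (Set.toFinite _)
      _ ≤ Gpos.ncard + Gnonpos.ncard := by
          refine (Set.ncard_union_le _ _).trans_eq ?_
          rw [Set.ncard_image_of_injective _ (Fin.snoc_left_injective (α := fun _ => Bool) _),
            Set.ncard_image_of_injective _ (Fin.snoc_left_injective (α := fun _ => Bool) _)]
      _ = (Gpos ∪ Gnonpos).ncard + (Gpos ∩ Gnonpos).ncard :=
          (Set.ncard_union_add_ncard_inter _ _).symm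
      _ ≤ ∑ j ∈ range (d + 1), N.choose j + ∑ j ∈ range d, N.choose j :=
          add_le_add ((Set.ncard_le_ncard hunion (Set.toFinite _)).trans (ih g hA hd)) hinter
      _ = ∑ j ∈ range (d + 1), (N + 1).choose j := (sum_range_choose_succ N d).symm

end SignPattern

section Layer

variable {n n' : ℕ} (W : Matrix (Fin n') (Fin n) ℝ) (b : Fin n' → ℝ)

noncomputable def neuronAffine (i : Fin n') : (Fin n → ℝ) →ᵃ[ℝ] ℝ :=
  (LinearMap.proj i ∘ₗ W.mulVecLin).toAffineMap + AffineMap.const ℝ _ (b i)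

lemma sig_eq_signPattern : sig W b = signPattern (neuronAffine W b) := rfl

noncomputable def maskedLayer (s : Fin n' → Bool) : (Fin n → ℝ) →ᵃ[ℝ] (Fin n' → ℝ) :=
  AffineMap.pi fun i => if s i then neuronAffine W b i else 0

lemma relu_eqOn_maskedLayer (s : Fin n' → Bool) :
    Set.EqOn (relu W b) (maskedLayer W b s) {y | sig W b y = s} := by
  intro y hy
  funext i
  have hi : decide (0 < W i ⬝ᵥ y + b i) = s i := congrFun hy i
  by_cases hpos : 0 < W i ⬝ᵥ y + b i
  · simp_all [relu, maskedLayer, neuronAffine, Matrix.mulVec, le_of_lt hpos]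
  · simp_all [relu, maskedLayer, neuronAffine]

end Layer

lemma minWidth_zero (n : ℕ → ℕ) : minWidth n 0 = n 0 := by
  simp [minWidth]

lemma minWidth_succ (n : ℕ → ℕ) (l : ℕ) :
    minWidth n (l + 1) = min (n (l + 1)) (minWidth n l) := by
  rw [minWidth, range_add_one, fold_insert (by simp)]
  rfl

section Network

variable (n : ℕ → ℕ) (W : ∀ l : ℕ, Matrix (Fin (n (l + 1))) (Fin (n l)) ℝ)
  (b : ∀ l : ℕ, Fin (n (l + 1)) → ℝ)

noncomputable def activationImage (L : ℕ) (s : ∀ l : Fin L, Fin (n (l.val + 1)) → Bool) :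
    Set (Fin (n L) → ℝ) :=
  fwd n W b L '' {x | msig n W b L x = s}

lemma msig_succ_eq_iff {L : ℕ} {x : Fin (n 0) → ℝ}
    {s : ∀ l : Fin (L + 1), Fin (n (l.val + 1)) → Bool} :
    msig n W b (L + 1) x = s ↔
      msig n W b L x = (fun l : Fin L => s l.castSucc) ∧
        sig (W L) (b L) (fwd n W b L x) = s (Fin.last L) := by
  rw [funext_iff (f := msig n W b (L + 1) x), Fin.forall_fin_succ',
    funext_iff (f := msig n W b L x)]
  rfl

lemma activationImage_zero (s : ∀ l : Fin 0, Fin (n (l.val + 1)) → Bool) :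
    activationImage n W b 0 s = Set.univ := by
  rw [activationImage, Set.eq_univ_of_forall fun x => Subsingleton.elim (msig n W b 0 x) s]
  exact Set.image_univ_of_surjective Function.surjective_id

lemma activationImage_succ {L : ℕ} (s : ∀ l : Fin (L + 1), Fin (n (l.val + 1)) → Bool) :
    activationImage n W b (L + 1) s =
      maskedLayer (W L) (b L) (s (Fin.last L)) ''
        (activationImage n W b L (fun l : Fin L => s l.castSucc) ∩
          {y | sig (W L) (b L) y = s (Fin.last L)}) := by
  have hregion : {x | msig n W b (L + 1) x = s} =
      {x | msig n W b L x = fun l : Fin L => s l.castSucc} ∩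
        fwd n W b L ⁻¹' {y | sig (W L) (b L) y = s (Fin.last L)} := by
    ext x
    exact msig_succ_eq_iff n W b
  calc activationImage n W b (L + 1) s
      = relu (W L) (b L) '' (activationImage n W b L (fun l : Fin L => s l.castSucc) ∩
          {y | sig (W L) (b L) y = s (Fin.last L)}) := by
        rw [activationImage, activationImage, hregion,
          show fwd n W b (L + 1) = relu (W L) (b L) ∘ fwd n W b L from rfl, Set.image_comp,
          Set.image_inter_preimage]
    _ = _ := ((relu_eqOn_maskedLayer _ _ _).mono Set.inter_subset_right).image_eq

lemma convex_activationImage (L : ℕ) (s : ∀ l : Fin L, Fin (n (l.val + 1)) → Bool) :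
    Convex ℝ (activationImage n W b L s) := by
  induction L with
  | zero => simpa only [activationImage_zero] using convex_univ
  | succ L ih =>
    rw [activationImage_succ, sig_eq_signPattern]
    exact ((ih _).inter (convex_signPattern_preimage _ _)).affine_image _

lemma finrank_vectorSpan_activationImage_le (L : ℕ)
    (s : ∀ l : Fin L, Fin (n (l.val + 1)) → Bool) :
    finrank ℝ (vectorSpan ℝ (activationImage n W b L s)) ≤ minWidth n L := by
  induction L with
  | zero =>
    rw [minWidth_zero]
    exact (Submodule.finrank_le _).trans_eq (finrank_fin_fun ℝ)
  | succ L ih =>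
    rw [activationImage_succ, ← AffineMap.map_vectorSpan, minWidth_succ]
    exact le_min ((Submodule.finrank_le _).trans_eq (finrank_fin_fun ℝ))
      ((Submodule.finrank_map_le _ _).trans
        ((Submodule.finrank_mono (vectorSpan_mono ℝ Set.inter_subset_left)).trans (ih _)))

lemma ncard_range_msig_succ_le_s10 (L : ℕ) :
    (Set.range (msig n W b (L + 1))).ncard ≤
      (∑ j ∈ range (minWidth n L + 1), (n (L + 1)).choose j) *
        (Set.range (msig n W b L)).ncard := by
  classical
  rw [Set.ncard_eq_toFinset_card', Set.ncard_eq_toFinset_card']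
  refine card_le_mul_card_image_of_maps_to
    (f := fun (t : ∀ l : Fin (L + 1), Fin (n (l.val + 1)) → Bool) (l : Fin L) => t l.castSucc)
    ?_ _ fun s _ => ?_
  · intro t ht
    obtain ⟨x, rfl⟩ := Set.mem_toFinset.1 ht
    exact Set.mem_toFinset.2 ⟨x, rfl⟩
  set S := sig (W L) (b L) '' activationImage n W b L s with hS
  calc _ ≤ S.toFinset.card := by
        refine card_le_card_of_injOn (fun t => t (Fin.last L)) ?_ ?_
        · intro t ht
          obtain ⟨hrange, rfl⟩ := mem_filter.1 (mem_coe.1 ht)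
          obtain ⟨x, rfl⟩ := Set.mem_toFinset.1 hrange
          exact Set.mem_toFinset.2 ⟨_, ⟨x, rfl, rfl⟩, rfl⟩
        · intro t₁ ht₁ t₂ ht₂ hlast
          have hinit :=
            (mem_filter.1 (mem_coe.1 ht₁)).2.trans (mem_filter.1 (mem_coe.1 ht₂)).2.symm
          exact funext (Fin.forall_fin_succ'.2 ⟨congrFun hinit, hlast⟩)
    _ = S.ncard := (Set.ncard_eq_toFinset_card' _).symm
    _ ≤ _ := by
        rw [hS, sig_eq_signPattern]
        exact ncard_image_signPattern_le _ (convex_activationImage n W b L s)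
          (finrank_vectorSpan_activationImage_le n W b L s)

end Network

theorem stmt10_general (L : ℕ) (n : ℕ → ℕ)
    (W : ∀ l : ℕ, Matrix (Fin (n (l + 1))) (Fin (n l)) ℝ)
    (b : ∀ l : ℕ, Fin (n (l + 1)) → ℝ) :
    (Set.range (msig n W b L)).ncard ≤
      ∏ l ∈ Finset.range L,
        ∑ j ∈ Finset.range (minWidth n l + 1), (n (l + 1)).choose j := by
  induction L with
  | zero => simpa using Set.ncard_le_one_of_subsingleton (Set.range (msig n W b 0))
  | succ L ih =>
    rw [prod_range_succ, mul_comm]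
    exact (ncard_range_msig_succ_le_s10 n W b L).trans (Nat.mul_le_mul_left _ ih)

/-- Montúfar's bound: in the multilayer setting with widths `n 0, …, n L` and layers
`h = (h_1, …, h_L)`, the number of attained multi signatures satisfies
`|𝒮_h| ≤ ∏_{l=1}^{L} ∑_{j=0}^{min(n_0, …, n_{l-1})} C(n_l, j)`. -/
theorem stmt10 (L : ℕ) (hL : 0 < L) (n : ℕ → ℕ) (hn : ∀ l, 0 < n l)
    (W : ∀ l : ℕ, Matrix (Fin (n (l + 1))) (Fin (n l)) ℝ)
    (b : ∀ l : ℕ, Fin (n (l + 1)) → ℝ) :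
    (Set.range (msig n W b L)).ncard ≤
      ∏ l ∈ Finset.range L,
        ∑ j ∈ Finset.range (minWidth n l + 1), (n (l + 1)).choose j :=
  stmt10_general L n W b
end

section
/- Let γ ∈ Γ be a collection satisfying the bound condition. In the multilayer setting with widths n_0, …, n_L and layers h = (h_1, …, h_L), the first-layer dimension histogram satisfies H̃^{(1)}(𝒮^{(1)}_h) ≼ φ^{(γ)}_{n_1}(e_{n_0}). -/
open Matrix

/-- Tail sum `∑_{j ≥ J} v j` of a histogram. -/
noncomputable def tailSum (v : ℕ → ℕ) (J : ℕ) : ℕ :=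
  ∑' j : ℕ, if J ≤ j then v j else 0

/-- The partial order `≼` on histograms: `v ≼ w` iff all tail sums of `v` are dominated by
those of `w`. -/
def hle (v w : ℕ → ℕ) : Prop := ∀ J : ℕ, tailSum v J ≤ tailSum w J

/-- The histogram `e_i` with a single entry `1` at index `i`. -/
def histE (i : ℕ) : ℕ → ℕ := fun j => if j = i then 1 else 0

/-- The activation histogram `ℋ_{n'}(𝒮)`: entry `j` counts the signatures `s ∈ 𝒮` with
`|s| = j` active units. -/
noncomputable def actHist (n' : ℕ) (S : Set (Fin n' → Bool)) : ℕ → ℕ :=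
  fun j => {s ∈ S | cnt s = j}.ncard

/-- The clipping function `cl_k`: all mass at indices `≥ k` is moved to index `k`. -/
noncomputable def clip (k : ℕ) (v : ℕ → ℕ) : ℕ → ℕ :=
  fun i => if i < k then v i else if i = k then tailSum v k else 0

/-- The bound condition for a collection `γ` (accessed as `γ n' n` for `n ≤ n'`, `n' ≥ 1`):
every `γ n' n` is a histogram in `V` (finitely supported); for every ReLU layer function
`h ∈ RL(n, n')` with `0 ≤ n ≤ n'` the activation histogram of its attained signatures is
dominated by `γ n' n` (for `n = 0` the layer functions are the constants, with activation
histogram `e_0`); and `γ n' n ≼ γ n' m` whenever `n ≤ m ≤ n'`. -/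
def BoundCondition (γ : ℕ → ℕ → ℕ → ℕ) : Prop :=
  (∀ n' n : ℕ, 0 < n' → n ≤ n' → (Function.support (γ n' n)).Finite) ∧
  (∀ n' : ℕ, 0 < n' → hle (histE 0) (γ n' 0)) ∧
  (∀ n n' : ℕ, 0 < n → 0 < n' → n ≤ n' →
    ∀ (W : Matrix (Fin n') (Fin n) ℝ) (b : Fin n' → ℝ),
      hle (actHist n' (Set.range (sig W b))) (γ n' n)) ∧
  (∀ n' n m : ℕ, 0 < n' → n ≤ m → m ≤ n' → hle (γ n' n) (γ n' m))

/-- The transition function `φ^{(γ)}_{n'} : V → V`,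
`v ↦ ∑_{m} v_m · cl_{min(m,n')}(γ_{min(m,n'), n'})`. -/
noncomputable def phi (γ : ℕ → ℕ → ℕ → ℕ) (n' : ℕ) (v : ℕ → ℕ) : ℕ → ℕ :=
  fun i => ∑' m : ℕ, v m * clip (min m n') (γ n' (min m n')) i

/-- The dimension histogram `H̃^{(i)}(U)`: entry `j` counts the length-`i` multi signatures
`(s_1, …, s_i) ∈ U` with `min(n_0, |s_1|, …, |s_i|) = j`. -/
noncomputable def dimHist (n : ℕ → ℕ) (i : ℕ)
    (U : Set (∀ l : Fin i, Fin (n (l.val + 1)) → Bool)) : ℕ → ℕ :=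
  fun j => {u ∈ U | minAct n i u = j}.ncard


lemma tailSum_eq_sum_range (v : ℕ → ℕ) (N J : ℕ) (hv : ∀ j, N ≤ j → v j = 0) :
    tailSum v J = ∑ j ∈ Finset.range N, if J ≤ j then v j else 0 := by
  apply tsum_eq_sum
  intro j hj
  simp only [Finset.mem_range, not_lt] at hj
  simp [hv j hj]

lemma exists_bound_of_finite_support (v : ℕ → ℕ) (h : (Function.support v).Finite) :
    ∃ N, ∀ j, N ≤ j → v j = 0 := by
  obtain ⟨N, hN⟩ := h.bddAbove
  refine ⟨N + 1, fun j hj => ?_⟩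
  by_contra h0
  have := hN (Function.mem_support.2 h0)
  omega

lemma tailSum_clip (v : ℕ → ℕ) (N : ℕ) (hv : ∀ j, N ≤ j → v j = 0) (k J : ℕ) :
    tailSum (clip k v) J = if J ≤ k then tailSum v J else 0 := by
  have hc : ∀ j, k + 1 ≤ j → clip k v j = 0 := by
    intro j hj; unfold clip; rw [if_neg (by omega), if_neg (by omega)]
  rw [tailSum_eq_sum_range (clip k v) (k + 1) J hc]
  by_cases hJ : J ≤ k
  · rw [if_pos hJ]
    set M := max N (k + 1) with hM
    have hsplit : ∀ (P : ℕ → Prop) (_ : DecidablePred P), (∀ j, k ≤ j → P j) →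
        (∑ j ∈ Finset.range M, if P j then v j else 0)
          = (∑ j ∈ Finset.range k, if P j then v j else 0) + ∑ j ∈ Finset.Ico k M, v j := by
      intro P _ hP
      rw [Finset.range_eq_Ico,
        ← Finset.sum_Ico_consecutive _ (Nat.zero_le k) (by omega : k ≤ M),
        ← Finset.range_eq_Ico]
      congr 1
      apply Finset.sum_congr rfl
      intro j hj
      rw [if_pos (hP j (Finset.mem_Ico.1 hj).1)]
    have hTk : tailSum v k = ∑ j ∈ Finset.Ico k M, v j := by
      rw [tailSum_eq_sum_range v M k (fun j hj => hv j (by omega)),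
        hsplit (fun j => k ≤ j) _ (fun j hj => hj)]
      rw [Finset.sum_eq_zero (fun j hj => if_neg (by simp only [Finset.mem_range] at hj; omega)),
        zero_add]
    rw [tailSum_eq_sum_range v M J (fun j hj => hv j (by omega)),
      hsplit (fun j => J ≤ j) _ (fun j hj => by omega)]
    rw [Finset.sum_range_succ]
    have hck : clip k v k = tailSum v k := by
      unfold clip; rw [if_neg (lt_irrefl k), if_pos rfl]
    rw [if_pos hJ, hck, hTk]
    congr 1
    apply Finset.sum_congr rfl
    intro j hj
    simp only [Finset.mem_range] at hj
    unfold clip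
    rw [if_pos hj]
  · rw [if_neg hJ]
    apply Finset.sum_eq_zero
    intro j hj
    simp only [Finset.mem_range] at hj
    rw [if_neg (by omega)]

lemma cnt_le {k : ℕ} (s : Fin k → Bool) : cnt s ≤ k := by
  unfold cnt
  calc (Finset.univ.filter fun j => s j = true).card ≤ Finset.univ.card :=
        Finset.card_filter_le _ _
    _ = k := Finset.card_fin k

/-- Let `γ ∈ Γ` satisfy the bound condition. In the multilayer setting with widths
`n 0, …, n L`, the first-layer dimension histogram satisfies
`H̃^{(1)}(𝒮^{(1)}_h) ≼ φ^{(γ)}_{n_1}(e_{n_0})`. -/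
theorem stmt12 (γ : ℕ → ℕ → ℕ → ℕ) (hγ : BoundCondition γ)
    (L : ℕ) (hL : 0 < L) (n : ℕ → ℕ) (hn : ∀ l, 0 < n l)
    (W : ∀ l : ℕ, Matrix (Fin (n (l + 1))) (Fin (n l)) ℝ)
    (b : ∀ l : ℕ, Fin (n (l + 1)) → ℝ) :
    hle (dimHist n 1 (Set.range (msig n W b 1))) (phi γ (n 1) (histE (n 0))) := by
  classical
  obtain ⟨hfin, -, hbound, hmono⟩ := hγ
  set n0 := n 0 with hn0
  set n1 := n 1 with hn1
  set k := min n0 n1 with hk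
  set S : Set (Fin n1 → Bool) := Set.range (sig (W 0) (b 0)) with hS
  -- RHS equals a single clipped histogram
  have hphi : phi γ n1 (histE n0) = clip k (γ n1 k) := by
    funext i
    unfold phi
    rw [tsum_eq_single n0 (fun m hm => by simp [histE, hm])]
    simp [histE, ← hk]
  -- bound on actHist support
  have hBbound : ∀ j, n1 + 1 ≤ j → actHist n1 S j = 0 := by
    intro j hj
    unfold actHist
    have : {s ∈ S | cnt s = j} = ∅ := by
      ext s
      simp only [Set.mem_sep_iff, Set.mem_empty_iff_false, iff_false, not_and]
      intro _ hc
      have := cnt_le s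
      omega
    rw [this, Set.ncard_empty]
  have hSfin : S.Finite := Set.toFinite S
  set T : Finset (Fin n1 → Bool) := hSfin.toFinset with hT
  have hcoe : ∀ (p : (Fin n1 → Bool) → Prop) (_ : DecidablePred p),
      {s ∈ S | p s} = ↑(T.filter p) := by
    intro p _
    ext s
    simp only [Finset.coe_filter, Set.Finite.mem_toFinset, Set.mem_setOf_eq, Set.mem_sep_iff, hT]
  have hBfin : ∀ j, actHist n1 S j = (T.filter fun s => cnt s = j).card := by
    intro j
    show {s ∈ S | cnt s = j}.ncard = _
    rw [hcoe _ _, Set.ncard_coe_finset]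
  -- tail sum of actHist counts signatures with many active units
  have hTS : tailSum (actHist n1 S) k = {s ∈ S | k ≤ cnt s}.ncard := by
    rw [tailSum_eq_sum_range _ (n1 + 1) k hBbound]
    have h1 : {s ∈ S | k ≤ cnt s}.ncard = (T.filter fun s => k ≤ cnt s).card := by
      rw [hcoe _ _, Set.ncard_coe_finset]
    rw [h1, Finset.card_eq_sum_card_fiberwise
      (f := fun s => cnt s) (t := Finset.range (n1 + 1))
      (fun s _ => Finset.mem_range.2 (Nat.lt_succ_of_le (cnt_le s)))]
    apply Finset.sum_congr rfl
    intro j hj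
    by_cases hkj : k ≤ j
    · rw [if_pos hkj, hBfin j, Finset.filter_filter]
      congr 1
      apply Finset.filter_congr
      intro s _
      omega
    · rw [if_neg hkj, Finset.filter_filter,
        Finset.filter_false_of_mem (fun s hs => ?_), Finset.card_empty]
      rintro ⟨h1, h2⟩
      omega
  -- minAct on length-1 signatures
  have hminAct : ∀ u : (∀ l : Fin 1, Fin (n (l.val + 1)) → Bool),
      minAct n 1 u = min (cnt (u 0)) n0 := by
    intro u
    unfold minAct
    rw [Finset.univ_unique, Finset.fold_singleton]
    rfl
  -- the LHS equals the clipped actHist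
  have hg : Function.Injective
      (fun u : (∀ l : Fin 1, Fin (n (l.val + 1)) → Bool) => u 0) := by
    intro u v h
    funext l
    have hl : l = 0 := Subsingleton.elim l 0
    subst hl
    exact h
  have hDH : ∀ j, dimHist n 1 (Set.range (msig n W b 1)) j
      = {s ∈ S | min (cnt s) n0 = j}.ncard := by
    intro j
    have himg : (fun u : (∀ l : Fin 1, Fin (n (l.val + 1)) → Bool) => u 0) ''
        {u ∈ Set.range (msig n W b 1) | minAct n 1 u = j}
          = {s ∈ S | min (cnt s) n0 = j} := by
      ext s
      constructor
      · rintro ⟨u, ⟨⟨x, rfl⟩, hm⟩, rfl⟩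
        rw [hminAct] at hm
        exact ⟨⟨x, rfl⟩, hm⟩
      · rintro ⟨⟨x, rfl⟩, hj⟩
        exact ⟨msig n W b 1 x, ⟨⟨x, rfl⟩, by rw [hminAct]; exact hj⟩, rfl⟩
    show ({u ∈ Set.range (msig n W b 1) | minAct n 1 u = j}).ncard = _
    rw [← himg, Set.ncard_image_of_injective _ hg]
  have hA : ∀ j, {s ∈ S | min (cnt s) n0 = j}.ncard = clip k (actHist n1 S) j := by
    intro j
    unfold clip
    rcases lt_trichotomy j k with hj | hj | hj
    · rw [if_pos hj]
      have : {s ∈ S | min (cnt s) n0 = j} = {s ∈ S | cnt s = j} := by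
        ext s
        constructor <;> rintro ⟨h1, h2⟩ <;> exact ⟨h1, by omega⟩
      rw [this]
      rfl
    · rw [if_neg (by omega), if_pos hj, hTS]
      congr 1
      ext s
      have := cnt_le s
      constructor <;> rintro ⟨h1, h2⟩ <;> exact ⟨h1, by omega⟩
    · rw [if_neg (by omega), if_neg (by omega)]
      have : {s ∈ S | min (cnt s) n0 = j} = ∅ := by
        ext s
        simp only [Set.mem_sep_iff, Set.mem_empty_iff_false, iff_false, not_and]
        intro _
        have := cnt_le s
        omega
      rw [this, Set.ncard_empty]
  -- hle of actHist against γ n1 k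
  have hB : hle (actHist n1 S) (γ n1 k) := by
    rcases le_or_gt n0 n1 with h01 | h01
    · have hk' : k = n0 := min_eq_left h01
      rw [hk']
      exact hbound n0 n1 (hn 0) (hn 1) h01 (W 0) (b 0)
    · have hk' : k = n1 := min_eq_right h01.le
      have hr : LinearMap.range (Matrix.mulVecLin (W 0 * (W 0)ᵀ))
          = LinearMap.range (Matrix.mulVecLin (W 0)) := by
        apply Submodule.eq_of_le_of_finrank_eq
        · rw [Matrix.mulVecLin_mul]
          exact LinearMap.range_comp_le_range _ _
        · exact Matrix.rank_self_mul_transpose (W 0)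
      have hsig : ∀ (x : Fin n0 → ℝ) (y : Fin n1 → ℝ),
          Matrix.mulVec (W 0 * (W 0)ᵀ) y = Matrix.mulVec (W 0) x →
          sig (W 0 * (W 0)ᵀ) (b 0) y = sig (W 0) (b 0) x := by
        intro x y h
        funext i
        unfold sig
        have h2 : (W 0 * (W 0)ᵀ) i ⬝ᵥ y = (W 0) i ⬝ᵥ x := congrFun h i
        rw [h2]
      have hrange : S = Set.range (sig (W 0 * (W 0)ᵀ) (b 0)) := by
        ext s
        constructor
        · rintro ⟨x, rfl⟩
          have hmem : Matrix.mulVec (W 0) x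
              ∈ LinearMap.range (Matrix.mulVecLin (W 0 * (W 0)ᵀ)) := by
            rw [hr]
            exact ⟨x, rfl⟩
          obtain ⟨y, hy⟩ := hmem
          exact ⟨y, hsig x y hy⟩
        · rintro ⟨y, rfl⟩
          exact ⟨(W 0)ᵀ.mulVec y, (hsig _ y (by rw [Matrix.mulVec_mulVec])).symm⟩
      rw [hk', hrange]
      exact hbound n1 n1 (hn 1) (hn 1) le_rfl _ (b 0)
  -- assemble
  intro J
  have hDHeq : dimHist n 1 (Set.range (msig n W b 1)) = clip k (actHist n1 S) :=
    funext fun j => (hDH j).trans (hA j)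
  rw [hDHeq, hphi]
  obtain ⟨N, hN⟩ := exists_bound_of_finite_support (γ n1 k)
    (hfin n1 k (hn 1) (min_le_right n0 n1))
  rw [tailSum_clip _ (n1 + 1) hBbound, tailSum_clip _ N hN]
  split_ifs with h
  · exact hB J
  · exact le_rfl
end

section
/- Let γ ∈ Γ be a collection satisfying the bound condition. In the multilayer setting with widths n_0, …, n_L and layers h = (h_1, …, h_L), for every l ∈ {2, …, L}, the dimension histograms satisfy the recursion H̃^{(l)}(𝒮^{(l)}_h) ≼ φ^{(γ)}_{n_l}(H̃^{(l-1)}(𝒮^{(l-1)}_h)). -/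
open Matrix

/-! On the inputs sharing a multi signature `u'` of length `k`, every layer acts as
`y ↦ D_s (W y + b)` with `D_s` the diagonal 0/1 mask of its signature `s`, a map of rank at most
`|s|`. Hence the first `k` layers send this region into an affine subspace of dimension at most
`m = min(n_0, |s_1|, …, |s_k|)`, and restricted to it layer `k + 1` is a ReLU layer with input
dimension `q = min(m, n_{k+1})`. The bound condition then controls how many last signatures with
at least `J` active units extend `u'`, and the new minimum is at most `q`, which is what clipping
at `q` records. Summing over `u'`, grouped by `m`, gives the tail sums of `φ`. -/

lemma tailSum_eq_sum_Ico {v : ℕ → ℕ} {N : ℕ} (hv : ∀ j, N ≤ j → v j = 0) (J : ℕ) :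
    tailSum v J = ∑ j ∈ Finset.Ico J N, v j := by
  rw [tailSum, tsum_eq_sum (s := Finset.Ico J N)]
  · exact Finset.sum_congr rfl fun j hj => if_pos (Finset.mem_Ico.1 hj).1
  · intro j hj
    split_ifs with hJj
    · exact hv j (by simp_all)
    · rfl

lemma exists_forall_ge_eq_zero {v : ℕ → ℕ} (hv : (Function.support v).Finite) (k : ℕ) :
    ∃ N, k ≤ N ∧ ∀ j, N ≤ j → v j = 0 := by
  obtain ⟨B, hB⟩ := hv.bddAbove
  refine ⟨B + k + 1, by omega, fun j hj => ?_⟩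
  by_contra hj0
  have := hB (Function.mem_support.2 hj0)
  omega

lemma clip_eq_zero {k i : ℕ} (hi : k < i) (v : ℕ → ℕ) : clip k v i = 0 := by
  simp [clip, hi.not_gt, hi.ne']

lemma tailSum_clip_s13 {v : ℕ → ℕ} (hv : (Function.support v).Finite) {k J : ℕ} (hJ : J ≤ k) :
    tailSum (clip k v) J = tailSum v J := by
  obtain ⟨N, hkN, hN⟩ := exists_forall_ge_eq_zero hv k
  rw [tailSum_eq_sum_Ico (N := k + 1) (fun j hj => clip_eq_zero hj v), Finset.sum_Ico_succ_top hJ,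
    tailSum_eq_sum_Ico hN, ← Finset.sum_Ico_consecutive _ hJ hkN]
  congr 1
  · exact Finset.sum_congr rfl fun j hj => if_pos (Finset.mem_Ico.1 hj).2
  · simp [clip, tailSum_eq_sum_Ico hN]

lemma tailSum_ncard_sep {α : Type*} [Finite α] (U : Set α) (f : α → ℕ) (J : ℕ) :
    tailSum (fun j => {u ∈ U | f u = j}.ncard) J = {u ∈ U | J ≤ f u}.ncard := by
  classical
  have := Fintype.ofFinite α
  set T : Finset α := Finset.univ.filter fun u => u ∈ U ∧ J ≤ f u
  have hf : ∀ u, f u < Finset.univ.sup f + 1 := fun u =>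
    Nat.lt_succ_of_le (Finset.le_sup (Finset.mem_univ u))
  have hT : ∀ u ∈ T, f u ∈ Finset.Ico J (Finset.univ.sup f + 1) := fun u hu =>
    Finset.mem_Ico.2 ⟨(Finset.mem_filter.1 hu).2.2, hf u⟩
  rw [tailSum_eq_sum_Ico (fun j hj => ?_), show {u ∈ U | J ≤ f u} = (T : Set α) by ext; simp [T],
    Set.ncard_coe_finset, Finset.card_eq_sum_card_fiberwise hT]
  · refine Finset.sum_congr rfl fun j hj => ?_
    rw [← Set.ncard_coe_finset]
    congr 1
    ext u
    simp only [Finset.coe_filter, Finset.mem_filter, Finset.mem_univ, true_and, T,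
      Set.mem_ofPred_eq]
    constructor
    · rintro ⟨hu, rfl⟩
      exact ⟨⟨hu, (Finset.mem_Ico.1 hj).1⟩, rfl⟩
    · rintro ⟨⟨hu, -⟩, rfl⟩
      exact ⟨hu, rfl⟩
  · rw [Set.ncard_eq_zero, Set.eq_empty_iff_forall_notMem]
    rintro u ⟨-, rfl⟩
    exact (hf u).not_ge hj

lemma tailSum_phi (γ : ℕ → ℕ → ℕ → ℕ) (n' : ℕ) {v : ℕ → ℕ} {M : ℕ} (hv : ∀ m, M ≤ m → v m = 0)
    (J : ℕ) :
    tailSum (phi γ n' v) J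
      = ∑ m ∈ Finset.range M, v m * tailSum (clip (min m n') (γ n' (min m n'))) J := by
  have hphi : ∀ i, phi γ n' v i
      = ∑ m ∈ Finset.range M, v m * clip (min m n') (γ n' (min m n')) i := fun i =>
    tsum_eq_sum fun m hm => by rw [hv m (by simpa using hm), zero_mul]
  have hclip : ∀ m i, n' + 1 ≤ i → clip (min m n') (γ n' (min m n')) i = 0 := fun m i hi =>
    clip_eq_zero (by omega) _
  rw [tailSum_eq_sum_Ico (N := n' + 1) (fun i hi => by simp [hphi, hclip _ i hi])]
  simp_rw [hphi, tailSum_eq_sum_Ico (hclip _), Finset.mul_sum]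
  exact Finset.sum_comm

lemma ncard_sep_eq_sum_ncard_fiber {α β : Type*} [Finite α] [DecidableEq β] (R : Set α)
    (P : α → Prop) (p : α → β) {T : Finset β} (hT : ∀ u ∈ R, p u ∈ T) :
    {u ∈ R | P u}.ncard = ∑ t ∈ T, {u ∈ R | P u ∧ p u = t}.ncard := by
  classical
  have := Fintype.ofFinite α
  simp only [Set.ncard_eq_toFinset_card']
  rw [Finset.card_eq_sum_card_fiberwise (f := p) (t := T) fun u hu => hT u (by simp_all)]
  refine Finset.sum_congr rfl fun t _ => ?_
  congr 1
  ext u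
  simp +contextual [and_assoc]

lemma sum_comp_eq_sum_ncard_mul {α : Type*} [Finite α] (S : Set α) [Fintype S] (g : α → ℕ) {M : ℕ}
    (hg : ∀ u ∈ S, g u < M) (F : ℕ → ℕ) :
    ∑ u ∈ S.toFinset, F (g u) = ∑ m ∈ Finset.range M, {u ∈ S | g u = m}.ncard * F m := by
  classical
  have := Fintype.ofFinite α
  rw [← Finset.sum_fiberwise_of_maps_to (t := Finset.range M) (g := g)
    fun u hu => Finset.mem_range.2 (hg u (Set.mem_toFinset.1 hu))]
  refine Finset.sum_congr rfl fun m _ => ?_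
  rw [Finset.sum_congr rfl fun u hu => by rw [(Finset.mem_filter.1 hu).2], Finset.sum_const,
    smul_eq_mul, Set.ncard_eq_toFinset_card']
  congr 2
  ext u
  simp

lemma tailSum_actHist {n' : ℕ} (S : Set (Fin n' → Bool)) (J : ℕ) :
    tailSum (actHist n' S) J = {s ∈ S | J ≤ cnt s}.ncard :=
  tailSum_ncard_sep S cnt J

lemma tailSum_actHist_mono {n' : ℕ} {S T : Set (Fin n' → Bool)} (h : S ⊆ T) (J : ℕ) :
    tailSum (actHist n' S) J ≤ tailSum (actHist n' T) J := by
  simp only [tailSum_actHist]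
  exact Set.ncard_le_ncard fun s hs => ⟨h hs.1, hs.2⟩

lemma tailSum_histE_zero : tailSum (histE 0) 0 = 1 := by
  rw [tailSum_eq_sum_Ico (v := histE 0) (N := 1) (fun j hj => by simp [histE]; omega)]
  rfl

lemma exists_mulVec_eq_of_finrank_le {K : Type*} [Field K] {n q : ℕ} (U : Submodule K (Fin n → K))
    (hU : Module.finrank K U ≤ q) : ∃ M : Matrix (Fin n) (Fin q) K, ∀ u ∈ U, ∃ z, M *ᵥ z = u := by
  let φ := U.subtype ∘ₗ (Module.finBasis K U).equivFun.symm.toLinearMap ∘ₗ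
    LinearMap.funLeft K K (Fin.castLE hU)
  refine ⟨LinearMap.toMatrix' φ, fun u hu => ?_⟩
  obtain ⟨z, hz⟩ := LinearMap.funLeft_surjective_of_injective K K _ (Fin.castLE_injective hU)
    ((Module.finBasis K U).equivFun ⟨u, hu⟩)
  exact ⟨z, by simp [φ, hz]⟩

lemma tailSum_actHist_range_sig_le {γ : ℕ → ℕ → ℕ → ℕ} (hγ : BoundCondition γ) {n' q : ℕ}
    (hn' : 0 < n') (hq : q ≤ n') (M : Matrix (Fin n') (Fin q) ℝ) (c : Fin n' → ℝ) {J : ℕ}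
    (hJ : J ≤ q) : tailSum (actHist n' (Set.range (sig M c))) J ≤ tailSum (γ n' q) J := by
  rcases Nat.eq_zero_or_pos q with rfl | hq0
  · obtain rfl : J = 0 := by omega
    calc tailSum (actHist n' (Set.range (sig M c))) 0 = 1 := by
          simp [Set.range_unique, tailSum_actHist]
      _ = tailSum (histE 0) 0 := tailSum_histE_zero.symm
      _ ≤ tailSum (γ n' 0) 0 := hγ.2.1 n' hn' 0
  · exact hγ.2.2.1 q n' hq0 hn' hq M c J

lemma tailSum_actHist_image_sig_le {γ : ℕ → ℕ → ℕ → ℕ} (hγ : BoundCondition γ) {N n' m : ℕ}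
    (hn' : 0 < n') (W : Matrix (Fin n') (Fin N) ℝ) (b : Fin n' → ℝ) {V : Submodule ℝ (Fin N → ℝ)}
    (hV : Module.finrank ℝ V ≤ m) {c : Fin N → ℝ} {X : Set (Fin N → ℝ)} (hX : ∀ x ∈ X, x - c ∈ V)
    {J : ℕ} (hJ : J ≤ min m n') :
    tailSum (actHist n' (sig W b '' X)) J ≤ tailSum (γ n' (min m n')) J := by
  have hWV : Module.finrank ℝ (V.map W.mulVecLin) ≤ min m n' :=
    le_min ((Submodule.finrank_map_le _ _).trans hV) ((Submodule.finrank_le _).trans (by simp))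
  obtain ⟨M, hM⟩ := exists_mulVec_eq_of_finrank_le _ hWV
  have hsub : sig W b '' X ⊆ Set.range (sig M (W *ᵥ c + b)) := by
    rintro _ ⟨x, hx, rfl⟩
    obtain ⟨z, hz⟩ := hM _ (Submodule.mem_map_of_mem (hX x hx))
    have hWx : W *ᵥ x + b = M *ᵥ z + (W *ᵥ c + b) := by
      rw [hz, Matrix.mulVecLin_apply, Matrix.mulVec_sub]
      abel
    exact ⟨z, funext fun i => congrArg (fun y : Fin n' → ℝ => decide (0 < y i)) hWx.symm⟩
  exact (tailSum_actHist_mono hsub J).trans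
    (tailSum_actHist_range_sig_le hγ hn' (min_le_right _ _) M _ hJ)

def mask {k : ℕ} (s : Fin k → Bool) : Matrix (Fin k) (Fin k) ℝ :=
  diagonal fun i => if s i then 1 else 0

lemma rank_mask {k : ℕ} (s : Fin k → Bool) : (mask s).rank = cnt s := by
  classical
  rw [mask, rank_diagonal, Fintype.card_subtype, cnt]
  congr 1
  ext i
  simp

lemma relu_eq_mask_mulVec {n n' : ℕ} (W : Matrix (Fin n') (Fin n) ℝ) (b : Fin n' → ℝ)
    (x : Fin n → ℝ) : relu W b x = mask (sig W b x) *ᵥ (W *ᵥ x + b) := by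
  funext i
  by_cases h : 0 < W i ⬝ᵥ x + b i
  · simp [relu, sig, mask, h, h.le, mulVec]
  · simp [relu, sig, mask, mulVec_diagonal, h, not_lt.1 h]

lemma minAct_le (n : ℕ → ℕ) (i : ℕ) (s : ∀ l : Fin i, Fin (n (l.val + 1)) → Bool) :
    minAct n i s ≤ n 0 :=
  Finset.fold_min_le _ |>.2 (Or.inl le_rfl)

lemma minAct_succ (n : ℕ → ℕ) (k : ℕ) (u : ∀ l : Fin (k + 1), Fin (n (l.val + 1)) → Bool) :
    minAct n (k + 1) u = min (cnt (u (Fin.last k))) (minAct n k fun l => u l.castSucc) := by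
  rw [minAct, Fin.univ_castSuccEmb, Finset.fold_cons, Finset.fold_map]
  rfl

section Network

variable (n : ℕ → ℕ) (W : ∀ l : ℕ, Matrix (Fin (n (l + 1))) (Fin (n l)) ℝ)
  (b : ∀ l : ℕ, Fin (n (l + 1)) → ℝ)

lemma fwd_succ (k : ℕ) (x : Fin (n 0) → ℝ) :
    fwd n W b (k + 1) x = relu (W k) (b k) (fwd n W b k x) :=
  rfl

theorem exists_submodule_fwd_sub_mem :
    ∀ (k : ℕ) (u : ∀ l : Fin k, Fin (n (l.val + 1)) → Bool),
      ∃ V : Submodule ℝ (Fin (n k) → ℝ), Module.finrank ℝ V ≤ minAct n k u ∧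
        ∃ c, ∀ x, msig n W b k x = u → fwd n W b k x - c ∈ V
  | 0, u => ⟨⊤, by simp [minAct], 0, fun _ _ => Submodule.mem_top⟩
  | k + 1, u => by
    obtain ⟨V, hV, c, hc⟩ := exists_submodule_fwd_sub_mem k fun l => u l.castSucc
    set D : Matrix (Fin (n (k + 1))) (Fin (n (k + 1))) ℝ := mask (u (Fin.last k))
    refine ⟨V.map (D * W k).mulVecLin, ?_, (D * W k) *ᵥ c + D *ᵥ b k, fun x hx => ?_⟩
    · rw [minAct_succ]
      refine le_min ?_ ((Submodule.finrank_map_le _ _).trans hV)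
      calc Module.finrank ℝ (V.map (D * W k).mulVecLin)
          ≤ (D * W k).rank := Submodule.finrank_mono LinearMap.map_le_range
        _ ≤ D.rank := rank_mul_le_left _ _
        _ = cnt (u (Fin.last k)) := rank_mask _
    · have hpre : msig n W b k x = fun l : Fin k => u l.castSucc :=
        funext fun l => congrFun hx l.castSucc
      have hlast : sig (W k) (b k) (fwd n W b k x) = u (Fin.last k) := congrFun hx (Fin.last k)
      have hfwd : fwd n W b (k + 1) x - ((D * W k) *ᵥ c + D *ᵥ b k)
          = (D * W k).mulVecLin (fwd n W b k x - c) := by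
        rw [fwd_succ, relu_eq_mask_mulVec, hlast, mulVecLin_apply, mulVec_sub, ← mulVec_mulVec,
          ← mulVec_mulVec, mulVec_add]
        abel
      rw [hfwd]
      exact Submodule.mem_map_of_mem (hc x hpre)

theorem ncard_extensions_le_tailSum_clip {γ : ℕ → ℕ → ℕ → ℕ} (hγ : BoundCondition γ) {k : ℕ}
    (hn : 0 < n (k + 1)) (J : ℕ) (u' : ∀ l : Fin k, Fin (n (l.val + 1)) → Bool) :
    {u ∈ Set.range (msig n W b (k + 1)) |
        J ≤ minAct n (k + 1) u ∧ (fun l : Fin k => u l.castSucc) = u'}.ncard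
      ≤ tailSum (clip (min (minAct n k u') (n (k + 1)))
          (γ (n (k + 1)) (min (minAct n k u') (n (k + 1))))) J := by
  set q := min (minAct n k u') (n (k + 1))
  set F := {u ∈ Set.range (msig n W b (k + 1)) |
    J ≤ minAct n (k + 1) u ∧ (fun l : Fin k => u l.castSucc) = u'}
  have hJF : ∀ u ∈ F, J ≤ cnt (u (Fin.last k)) ∧ J ≤ q := by
    rintro u ⟨-, hJ, rfl⟩
    rw [minAct_succ, le_min_iff] at hJ
    exact ⟨hJ.1, le_min hJ.2 (hJ.1.trans (cnt_le _))⟩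
  by_cases hJ : J ≤ q
  swap
  · rw [(Set.ncard_eq_zero).2 (Set.eq_empty_of_forall_notMem fun u hu => hJ (hJF u hu).2)]
    exact Nat.zero_le _
  rw [tailSum_clip_s13 (hγ.1 _ _ hn (min_le_right _ _)) hJ]
  obtain ⟨V, hV, c, hc⟩ := exists_submodule_fwd_sub_mem n W b k u'
  have hinj : Set.InjOn (fun u => u (Fin.last k)) F := by
    rintro u₁ ⟨-, -, h₁⟩ u₂ ⟨-, -, h₂⟩ he
    funext l
    exact Fin.lastCases he (fun l' => (congrFun h₁ l').trans (congrFun h₂ l').symm) l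
  have hsub : (fun u => u (Fin.last k)) '' F ⊆
      {s ∈ sig (W k) (b k) '' (fwd n W b k '' {x | msig n W b k x = u'}) | J ≤ cnt s} := by
    rintro _ ⟨u, hu, rfl⟩
    obtain ⟨⟨x, rfl⟩, -, hpre⟩ := id hu
    exact ⟨⟨_, ⟨x, funext fun l => congrFun hpre l, rfl⟩, rfl⟩, (hJF _ hu).1⟩
  calc F.ncard = ((fun u => u (Fin.last k)) '' F).ncard := hinj.ncard_image.symm
    _ ≤ _ := Set.ncard_le_ncard hsub
    _ = tailSum (actHist _ (sig (W k) (b k) '' (fwd n W b k '' {x | msig n W b k x = u'}))) J :=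
      (tailSum_actHist _ J).symm
    _ ≤ _ := tailSum_actHist_image_sig_le hγ hn (W k) (b k) hV
      (by rintro _ ⟨x, hx, rfl⟩; exact hc x hx) hJ

end Network

theorem stmt13_general (γ : ℕ → ℕ → ℕ → ℕ) (hγ : BoundCondition γ)
    (n : ℕ → ℕ) (hn : ∀ l, 0 < n l)
    (W : ∀ l : ℕ, Matrix (Fin (n (l + 1))) (Fin (n l)) ℝ)
    (b : ∀ l : ℕ, Fin (n (l + 1)) → ℝ)
    (l : ℕ) (hl1 : 2 ≤ l) :
    hle (dimHist n l (Set.range (msig n W b l)))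
      (phi γ (n l) (dimHist n (l - 1) (Set.range (msig n W b (l - 1))))) := by
  obtain ⟨k, rfl⟩ : ∃ k, l = k + 1 := ⟨l - 1, by omega⟩
  rw [Nat.add_sub_cancel]
  classical
  intro J
  set S := Set.range (msig n W b k)
  set F : ℕ → ℕ := fun m =>
    tailSum (clip (min m (n (k + 1))) (γ (n (k + 1)) (min m (n (k + 1))))) J
  have hS : ∀ m, n 0 + 1 ≤ m → dimHist n k S m = 0 := fun m hm =>
    (Set.ncard_eq_zero).2 (Set.eq_empty_of_forall_notMem fun u ⟨_, hu⟩ => by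
      have := minAct_le n k u
      omega)
  calc tailSum (dimHist n (k + 1) (Set.range (msig n W b (k + 1)))) J
      = {u ∈ Set.range (msig n W b (k + 1)) | J ≤ minAct n (k + 1) u}.ncard :=
        tailSum_ncard_sep _ _ J
    _ = ∑ u' ∈ S.toFinset, {u ∈ Set.range (msig n W b (k + 1)) |
          J ≤ minAct n (k + 1) u ∧ (fun l : Fin k => u l.castSucc) = u'}.ncard :=
        ncard_sep_eq_sum_ncard_fiber _ _ _ fun _ ⟨x, hx⟩ =>
          Set.mem_toFinset.2 ⟨x, funext fun l => congrFun hx l.castSucc⟩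
    _ ≤ ∑ u' ∈ S.toFinset, F (minAct n k u') :=
        Finset.sum_le_sum fun u' _ => ncard_extensions_le_tailSum_clip n W b hγ (hn _) J u'
    _ = ∑ m ∈ Finset.range (n 0 + 1), dimHist n k S m * F m :=
        sum_comp_eq_sum_ncard_mul S _ (fun u _ => Nat.lt_succ_of_le (minAct_le n k u)) F
    _ = tailSum (phi γ (n (k + 1)) (dimHist n k S)) J := (tailSum_phi γ _ hS J).symm

/-- Let `γ ∈ Γ` satisfy the bound condition. In the multilayer setting with widths
`n 0, …, n L`, for every `l ∈ {2, …, L}` the dimension histograms satisfy the recursion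
`H̃^{(l)}(𝒮^{(l)}_h) ≼ φ^{(γ)}_{n_l}(H̃^{(l-1)}(𝒮^{(l-1)}_h))`. -/
theorem stmt13 (γ : ℕ → ℕ → ℕ → ℕ) (hγ : BoundCondition γ)
    (L : ℕ) (hL : 0 < L) (n : ℕ → ℕ) (hn : ∀ l, 0 < n l)
    (W : ∀ l : ℕ, Matrix (Fin (n (l + 1))) (Fin (n l)) ℝ)
    (b : ∀ l : ℕ, Fin (n (l + 1)) → ℝ)
    (l : ℕ) (hl1 : 2 ≤ l) (hl2 : l ≤ L) :
    hle (dimHist n l (Set.range (msig n W b l)))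
      (phi γ (n l) (dimHist n (l - 1) (Set.range (msig n W b (l - 1))))) :=
  stmt13_general γ hγ n hn W b l hl1
end
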